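/- arXiv:2102.07930 — 6 statements merged into one kernel-verified Lean document; each statement's English description precedes it below -/
import Mathlib

section
/- Let n ≥ 1, let M ∈ ℝ^{n×n} be symmetric positive semidefinite and L ∈ ℝ^{n×n} symmetric positive definite, f : ℝ^n → ℝ smooth, F(φ) = (1/2)⟨φ, Lφ⟩ + f(φ), and g : ℝ^n → ℝ^n smooth. Fix φ^{n-1}, φ^n ∈ ℝ^n and define u(Δt, β) as in the SVM prediction–correction scheme. If ⟨∇F(φ^n), g(φ^n)⟩ ≠ 0, then there exists Δt* > 0 such that the equation u(Δt, β) = 0 defines a unique continuously differentiable function β : [0, Δt*] → ℝ with β(0) = 0 and u(Δt, β(Δt)) = 0 for all Δt ∈ [0, Δt*]. -/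
open scoped RealInnerProductSpace
open Matrix

noncomputable section

/-- `ℝ^n` with the Euclidean inner product. -/
abbrev Vec (n : ℕ) := EuclideanSpace ℝ (Fin n)

/-- Action of a matrix on a Euclidean vector. -/
def mv {n : ℕ} (A : Matrix (Fin n) (Fin n) ℝ) (x : Vec n) : Vec n :=
  Matrix.toEuclideanLin A x

/-- Free energy `F(φ) = (1/2)⟨φ, Lφ⟩ + f(φ)`. -/
def freeEnergy {n : ℕ} (L : Matrix (Fin n) (Fin n) ℝ) (f : Vec n → ℝ) (φ : Vec n) : ℝ :=
  (1/2 : ℝ) * ⟪φ, mv L φ⟫ + f φ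

/-- Extrapolation `φ̄ = (3φⁿ − φⁿ⁻¹)/2`. -/
def phiBar {n : ℕ} (φm φn : Vec n) : Vec n := (1/2 : ℝ) • ((3 : ℝ) • φn - φm)

/-- The matrix `(I + (Δt/2) M L)⁻¹`. -/
def svmInv {n : ℕ} (M L : Matrix (Fin n) (Fin n) ℝ) (Δt : ℝ) : Matrix (Fin n) (Fin n) ℝ :=
  (1 + (Δt / 2) • (M * L))⁻¹

/-- Predictor `φ̃(Δt) = (I + (Δt/2)ML)⁻¹ (φⁿ − (Δt/2) M ∇f(φ̄))`. -/
def phiTilde {n : ℕ} (M L : Matrix (Fin n) (Fin n) ℝ) (f : Vec n → ℝ)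
    (φm φn : Vec n) (Δt : ℝ) : Vec n :=
  mv (svmInv M L Δt) (φn - (Δt / 2) • mv M (gradient f (phiBar φm φn)))

/-- Predicted chemical potential `μ̃(Δt) = Lφ̃(Δt) + ∇f(φ̃(Δt))`. -/
def muTilde {n : ℕ} (M L : Matrix (Fin n) (Fin n) ℝ) (f : Vec n → ℝ)
    (φm φn : Vec n) (Δt : ℝ) : Vec n :=
  mv L (phiTilde M L f φm φn Δt) + gradient f (phiTilde M L f φm φn Δt)

/-- Predicted energy `F̃(Δt) = F(φⁿ) − Δt ⟨μ̃, Mμ̃⟩`. -/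
def Ftilde {n : ℕ} (M L : Matrix (Fin n) (Fin n) ℝ) (f : Vec n → ℝ)
    (φm φn : Vec n) (Δt : ℝ) : ℝ :=
  freeEnergy L f φn - Δt * ⟪muTilde M L f φm φn Δt, mv M (muTilde M L f φm φn Δt)⟫

/-- Corrector `φ̂(Δt) = (I + (Δt/2)ML)⁻¹ ((I − (Δt/2)ML)φⁿ − Δt M ∇f(φ̃(Δt)))`. -/
def phiHat {n : ℕ} (M L : Matrix (Fin n) (Fin n) ℝ) (f : Vec n → ℝ)
    (φm φn : Vec n) (Δt : ℝ) : Vec n :=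
  mv (svmInv M L Δt)
    (mv (1 - (Δt / 2) • (M * L)) φn - Δt • mv M (gradient f (phiTilde M L f φm φn Δt)))

/-- `φ̌(Δt) = (I + (Δt/2)ML)⁻¹ g(φ̃(Δt))`. -/
def phiCheck {n : ℕ} (M L : Matrix (Fin n) (Fin n) ℝ) (f : Vec n → ℝ)
    (g : Vec n → Vec n) (φm φn : Vec n) (Δt : ℝ) : Vec n :=
  mv (svmInv M L Δt) (g (phiTilde M L f φm φn Δt))

/-- `u(Δt, β) = F(φ̂(Δt) + β φ̌(Δt)) − F̃(Δt)`. -/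
def uFun {n : ℕ} (M L : Matrix (Fin n) (Fin n) ℝ) (f : Vec n → ℝ)
    (g : Vec n → Vec n) (φm φn : Vec n) (Δt β : ℝ) : ℝ :=
  freeEnergy L f (phiHat M L f φm φn Δt + β • phiCheck M L f g φm φn Δt)
    - Ftilde M L f φm φn Δt


section Aux

open scoped ContDiff
open InnerProductSpace

attribute [local instance] Matrix.linftyOpNormedAddCommGroup Matrix.linftyOpNormedRing
  Matrix.linftyOpNormedAlgebra

variable {n : ℕ}

lemma mv_apply (A : Matrix (Fin n) (Fin n) ℝ) (x : Vec n) (i : Fin n) :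
    mv A x i = ∑ j, A i j * x j := by
  simp [mv, Matrix.toEuclideanLin_apply, Matrix.mulVec, dotProduct]

lemma mv_one (x : Vec n) : mv 1 x = x := by
  ext i
  simp [mv_apply, Matrix.one_apply, Finset.sum_ite_eq]

section mvSmooth

variable {E : Type*} [NormedAddCommGroup E] [NormedSpace ℝ E]

lemma ContDiffAt.mv' {A : E → Matrix (Fin n) (Fin n) ℝ} {x : E → Vec n} {p : E}
    (hA : ContDiffAt ℝ ∞ A p) (hx : ContDiffAt ℝ ∞ x p) :
    ContDiffAt ℝ ∞ (fun q => mv (A q) (x q)) p := by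
  rw [contDiffAt_euclidean]
  intro i
  have h : (fun q => mv (A q) (x q) i) = fun q => ∑ j, A q i j * x q j := by
    funext q; rw [mv_apply]
  rw [h]
  refine ContDiffAt.sum fun j _ => ContDiffAt.mul ?_ ?_
  · exact ((Matrix.entryLinearMap ℝ ℝ i j).toContinuousLinearMap.contDiff.contDiffAt).comp p hA
  · exact ((EuclideanSpace.proj j : Vec n →L[ℝ] ℝ).contDiff.contDiffAt).comp p hx

end mvSmooth

lemma contDiff_gradient (f : Vec n → ℝ) (hf : ContDiff ℝ ∞ f) :
    ContDiff ℝ ∞ (gradient f) := by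
  have h1 : ContDiff ℝ ∞ (fderiv ℝ f) := hf.fderiv_right (by simp)
  exact ((toDual ℝ (Vec n)).symm.contDiff).comp h1

variable (M L : Matrix (Fin n) (Fin n) ℝ) (f : Vec n → ℝ) (g : Vec n → Vec n) (φm φn : Vec n)

/-- The matrix `I + (t/2) M L`. -/
def Amat (t : ℝ) : Matrix (Fin n) (Fin n) ℝ := 1 + (t / 2) • (M * L)

lemma contDiff_Amat : ContDiff ℝ ∞ (Amat M L) :=
  contDiff_const.add ((contDiff_id.div_const 2).smul contDiff_const)

lemma isOpen_unitSet : IsOpen {t : ℝ | IsUnit (Amat M L t)} :=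
  Units.isOpen.preimage (contDiff_Amat M L).continuous

lemma isUnit_Amat_zero : IsUnit (Amat M L 0) := by
  simp [Amat]

lemma contDiffAt_svmInv {t : ℝ} (ht : IsUnit (Amat M L t)) :
    ContDiffAt ℝ ∞ (svmInv M L) t := by
  have h : svmInv M L = fun s => Ring.inverse (Amat M L s) := by
    funext s
    rw [svmInv, Amat, Matrix.nonsing_inv_eq_ringInverse]
  rw [h]
  have h2 : ContDiffAt ℝ ∞ (Ring.inverse : Matrix (Fin n) (Fin n) ℝ → _) (Amat M L t) := by
    have := contDiffAt_ringInverse ℝ (n := ∞) ht.unit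
    rwa [ht.unit_spec] at this
  exact h2.comp t (contDiff_Amat M L).contDiffAt

lemma contDiffAt_phiTilde {t : ℝ} (ht : IsUnit (Amat M L t)) :
    ContDiffAt ℝ ∞ (phiTilde M L f φm φn) t :=
  ContDiffAt.mv' (contDiffAt_svmInv M L ht)
    ((contDiff_const.sub ((contDiff_id.div_const 2).smul contDiff_const)).contDiffAt)

lemma contDiffAt_muTilde (hf : ContDiff ℝ ∞ f) {t : ℝ} (ht : IsUnit (Amat M L t)) :
    ContDiffAt ℝ ∞ (muTilde M L f φm φn) t := by
  have hφ := contDiffAt_phiTilde M L f φm φn ht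
  exact (ContDiffAt.mv' contDiffAt_const hφ).add
    (((contDiff_gradient f hf).contDiffAt).comp t hφ)

lemma contDiffAt_Ftilde (hf : ContDiff ℝ ∞ f) {t : ℝ} (ht : IsUnit (Amat M L t)) :
    ContDiffAt ℝ ∞ (Ftilde M L f φm φn) t := by
  have hμ := contDiffAt_muTilde M L f φm φn hf ht
  exact contDiffAt_const.sub
    (contDiffAt_id.mul (hμ.inner ℝ (ContDiffAt.mv' contDiffAt_const hμ)))

lemma contDiffAt_phiHat (hf : ContDiff ℝ ∞ f) {t : ℝ} (ht : IsUnit (Amat M L t)) :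
    ContDiffAt ℝ ∞ (phiHat M L f φm φn) t := by
  have hφ := contDiffAt_phiTilde M L f φm φn ht
  refine ContDiffAt.mv' (contDiffAt_svmInv M L ht) (ContDiffAt.sub ?_ ?_)
  · exact ContDiffAt.mv'
      ((contDiff_const.sub ((contDiff_id.div_const 2).smul contDiff_const)).contDiffAt)
      contDiffAt_const
  · exact contDiffAt_id.smul
      (ContDiffAt.mv' contDiffAt_const (((contDiff_gradient f hf).contDiffAt).comp t hφ))

lemma contDiffAt_phiCheck (hg : ContDiff ℝ ∞ g) {t : ℝ} (ht : IsUnit (Amat M L t)) :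
    ContDiffAt ℝ ∞ (phiCheck M L f g φm φn) t := by
  have hφ := contDiffAt_phiTilde M L f φm φn ht
  exact ContDiffAt.mv' (contDiffAt_svmInv M L ht) ((hg.contDiffAt).comp t hφ)

lemma contDiff_freeEnergy (hf : ContDiff ℝ ∞ f) : ContDiff ℝ ∞ (freeEnergy L f) := by
  refine ContDiff.add (contDiff_const.mul (ContDiff.inner ℝ contDiff_id ?_)) hf
  exact contDiff_iff_contDiffAt.2 fun x => ContDiffAt.mv' contDiffAt_const contDiffAt_id

lemma contDiffAt_U (hf : ContDiff ℝ ∞ f) (hg : ContDiff ℝ ∞ g) {p : ℝ × ℝ}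
    (ht : IsUnit (Amat M L p.1)) :
    ContDiffAt ℝ ∞ (fun q : ℝ × ℝ => uFun M L f g φm φn q.1 q.2) p := by
  have h1 : ContDiffAt ℝ ∞ (fun q : ℝ × ℝ => phiHat M L f φm φn q.1) p :=
    (contDiffAt_phiHat M L f φm φn hf ht).comp p contDiffAt_fst
  have h2 : ContDiffAt ℝ ∞ (fun q : ℝ × ℝ => phiCheck M L f g φm φn q.1) p :=
    (contDiffAt_phiCheck M L f g φm φn hg ht).comp p contDiffAt_fst
  have h3 : ContDiffAt ℝ ∞ (fun q : ℝ × ℝ => Ftilde M L f φm φn q.1) p :=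
    (contDiffAt_Ftilde M L f φm φn hf ht).comp p contDiffAt_fst
  exact ContDiffAt.sub
    (((contDiff_freeEnergy L f hf).contDiffAt).comp p (h1.add (contDiffAt_snd.smul h2))) h3

lemma svmInv_zero : svmInv M L 0 = 1 := by
  simp [svmInv]

lemma phiTilde_zero : phiTilde M L f φm φn 0 = φn := by
  simp [phiTilde, svmInv_zero, mv_one]

lemma phiHat_zero : phiHat M L f φm φn 0 = φn := by
  simp [phiHat, svmInv_zero, mv_one]

lemma phiCheck_zero : phiCheck M L f g φm φn 0 = g φn := by
  simp [phiCheck, svmInv_zero, mv_one, phiTilde_zero]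

lemma Ftilde_zero : Ftilde M L f φm φn 0 = freeEnergy L f φn := by
  simp [Ftilde]

lemma U_zero_eq (b : ℝ) :
    uFun M L f g φm φn 0 b = freeEnergy L f (φn + b • g φn) - freeEnergy L f φn := by
  rw [uFun, phiHat_zero, phiCheck_zero, Ftilde_zero]

lemma one_le_inf : (1 : WithTop ℕ∞) ≤ ∞ := by
  exact_mod_cast le_top

lemma fderiv_U_apply (hf : ContDiff ℝ ∞ f) (hg : ContDiff ℝ ∞ g) :
    fderiv ℝ (fun q : ℝ × ℝ => uFun M L f g φm φn q.1 q.2) ((0 : ℝ), (0 : ℝ)) (0, 1)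
      = ⟪gradient (freeEnergy L f) φn, g φn⟫ := by
  set U : ℝ × ℝ → ℝ := fun q => uFun M L f g φm φn q.1 q.2 with hU
  have hU0 : ContDiffAt ℝ ∞ U ((0 : ℝ), (0 : ℝ)) :=
    contDiffAt_U M L f g φm φn hf hg (by simpa using isUnit_Amat_zero M L)
  have hdiff : DifferentiableAt ℝ U ((0 : ℝ), (0 : ℝ)) := hU0.differentiableAt (by simp)
  have hγ : HasDerivAt (fun b : ℝ => ((0 : ℝ), b)) ((0 : ℝ), (1 : ℝ)) 0 :=
    (hasDerivAt_const 0 (0 : ℝ)).prodMk (hasDerivAt_id 0)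
  have H1 : HasDerivAt (fun b : ℝ => U (0, b))
      (fderiv ℝ U ((0 : ℝ), (0 : ℝ)) (0, 1)) 0 :=
    hdiff.hasFDerivAt.comp_hasDerivAt 0 hγ
  have hFd : DifferentiableAt ℝ (freeEnergy L f) φn :=
    ((contDiff_freeEnergy L f hf).differentiable (by simp)).differentiableAt
  have hline : HasDerivAt (fun b : ℝ => φn + b • g φn) (g φn) 0 := by
    simpa using ((hasDerivAt_id (0 : ℝ)).smul_const (g φn))
  have H2 : HasDerivAt (fun b : ℝ => freeEnergy L f (φn + b • g φn) - freeEnergy L f φn)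
      (fderiv ℝ (freeEnergy L f) φn (g φn)) 0 := by
    have h0 : φn + (0 : ℝ) • g φn = φn := by simp
    have hF' : HasFDerivAt (freeEnergy L f) (fderiv ℝ (freeEnergy L f) φn)
        (φn + (0 : ℝ) • g φn) := by rw [h0]; exact hFd.hasFDerivAt
    have := hF'.comp_hasDerivAt 0 hline
    simpa using this.sub_const (freeEnergy L f φn)
  have heq : (fun b : ℝ => U (0, b))
      = fun b : ℝ => freeEnergy L f (φn + b • g φn) - freeEnergy L f φn := by
    funext b; exact U_zero_eq M L f g φm φn b
  rw [heq] at H1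
  rw [H1.unique H2, gradient]
  exact (toDual_symm_apply).symm

lemma exists_prod_equiv (D : ℝ × ℝ →L[ℝ] ℝ) (hc : D (0, 1) ≠ 0) :
    ∃ e : (ℝ × ℝ) ≃L[ℝ] ℝ × ℝ,
      (e : (ℝ × ℝ) →L[ℝ] ℝ × ℝ) = (ContinuousLinearMap.fst ℝ ℝ ℝ).prod D := by
  set T : (ℝ × ℝ) →L[ℝ] ℝ × ℝ := (ContinuousLinearMap.fst ℝ ℝ ℝ).prod D with hT
  have hinj : Function.Injective T := by
    intro v w hvw
    have hvw' : (v.1, D v) = (w.1, D w) := hvw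
    simp only [Prod.mk.injEq] at hvw'
    obtain ⟨h1, h2⟩ := hvw'
    have hv : v - w = (v.2 - w.2) • ((0 : ℝ), (1 : ℝ)) := by
      ext
      · simp [h1]
      · simp
    have h3 : D (v - w) = 0 := by rw [map_sub, h2, sub_self]
    rw [hv, _root_.map_smul, smul_eq_mul] at h3
    have h4 : v.2 - w.2 = 0 := (mul_eq_zero.1 h3).resolve_right hc
    exact Prod.ext h1 (by linarith)
  have hker : LinearMap.ker (T : ℝ × ℝ →ₗ[ℝ] ℝ × ℝ) = ⊥ := LinearMap.ker_eq_bot_of_injective (f := (T : ℝ × ℝ →ₗ[ℝ] ℝ × ℝ)) hinj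
  have hsurj : Function.Surjective T :=
    (LinearMap.injective_iff_surjective (f := (T : ℝ × ℝ →ₗ[ℝ] ℝ × ℝ))).1 hinj
  refine ⟨ContinuousLinearEquiv.ofBijective T hker (LinearMap.range_eq_top.2 hsurj), ?_⟩
  rfl

end Aux


/-- Implicit function `β(Δt)` for the SVM scheme.
If `⟨∇F(φⁿ), g(φⁿ)⟩ ≠ 0`, there is `Δt* > 0` such that `u(Δt, β) = 0` defines a unique
continuously differentiable function `β : [0, Δt*] → ℝ` with `β(0) = 0` and
`u(Δt, β(Δt)) = 0` for all `Δt ∈ [0, Δt*]`. -/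
theorem svm_implicit_function_exists {n : ℕ} (hn : 1 ≤ n)
    (M L : Matrix (Fin n) (Fin n) ℝ) (hM : M.PosSemidef) (hL : L.PosDef)
    (f : Vec n → ℝ) (hf : ContDiff ℝ (⊤ : ℕ∞) f)
    (g : Vec n → Vec n) (hg : ContDiff ℝ (⊤ : ℕ∞) g)
    (φm φn : Vec n)
    (hne : ⟪gradient (freeEnergy L f) φn, g φn⟫ ≠ 0) :
    ∃ Δtstar > (0 : ℝ), ∃ β : ℝ → ℝ,
      (ContDiffOn ℝ 1 β (Set.Icc 0 Δtstar) ∧ β 0 = 0 ∧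
        ∀ Δt ∈ Set.Icc (0 : ℝ) Δtstar, uFun M L f g φm φn Δt (β Δt) = 0) ∧
      ∀ β' : ℝ → ℝ,
        (ContDiffOn ℝ 1 β' (Set.Icc 0 Δtstar) ∧ β' 0 = 0 ∧
          ∀ Δt ∈ Set.Icc (0 : ℝ) Δtstar, uFun M L f g φm φn Δt (β' Δt) = 0) →
        Set.EqOn β' β (Set.Icc 0 Δtstar) := by
  classical
  open scoped ContDiff in
  have hf' : ContDiff ℝ ∞ f := hf.of_le (by simp)
  have hg' : ContDiff ℝ ∞ g := hg.of_le (by simp)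
  set U : ℝ × ℝ → ℝ := fun q => uFun M L f g φm φn q.1 q.2 with hUdef
  have hA0 : IsUnit (Amat M L (0 : ℝ)) := isUnit_Amat_zero M L
  have hU00 : ContDiffAt ℝ ∞ U ((0 : ℝ), (0 : ℝ)) :=
    contDiffAt_U M L f g φm φn hf' hg' hA0
  have hUval : U (0, 0) = 0 := by
    show uFun M L f g φm φn 0 0 = 0
    rw [U_zero_eq M L f g φm φn 0]
    simp
  have hD1 : fderiv ℝ U ((0 : ℝ), (0 : ℝ)) (0, 1)
      = ⟪gradient (freeEnergy L f) φn, g φn⟫ :=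
    fderiv_U_apply M L f g φm φn hf' hg'
  obtain ⟨e, he⟩ := exists_prod_equiv (fderiv ℝ U ((0 : ℝ), (0 : ℝ)))
    (by rw [hD1]; exact hne)
  set h : ℝ × ℝ → ℝ × ℝ := fun p => (p.1, U p) with hhdef
  have hh : ContDiffAt ℝ ∞ h ((0 : ℝ), (0 : ℝ)) := contDiffAt_fst.prodMk hU00
  have hhd : HasFDerivAt h (e : (ℝ × ℝ) →L[ℝ] ℝ × ℝ) ((0 : ℝ), (0 : ℝ)) := by
    rw [he]
    exact hasFDerivAt_fst.prodMk (hU00.differentiableAt (by simp)).hasFDerivAt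
  set Φ := hh.toOpenPartialHomeomorph h hhd (by simp) with hΦdef
  have hΦcoe : ⇑Φ = h := hh.toOpenPartialHomeomorph_coe hhd (by simp)
  have h00s : ((0 : ℝ), (0 : ℝ)) ∈ Φ.source :=
    hh.mem_toOpenPartialHomeomorph_source hhd (by simp)
  have hh00 : h (0, 0) = ((0 : ℝ), (0 : ℝ)) := by
    show ((0 : ℝ), U (0, 0)) = ((0 : ℝ), (0 : ℝ))
    rw [hUval]
  have h00t : ((0 : ℝ), (0 : ℝ)) ∈ Φ.target := by
    have := hh.image_mem_toOpenPartialHomeomorph_target hhd (by simp)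
    rwa [hh00] at this
  set s : Set (ℝ × ℝ) := {p | IsUnit (Amat M L p.1)} with hsdef
  have hsOpen : IsOpen s := (isOpen_unitSet M L).preimage continuous_fst
  have hUs : ContDiffOn ℝ ∞ U s := fun p hp =>
    (contDiffAt_U M L f g φm φn hf' hg' hp).contDiffWithinAt
  have hfdc : ContinuousOn (fderiv ℝ U) s :=
    hUs.continuousOn_fderiv_of_isOpen hsOpen one_le_inf
  set W : Set (ℝ × ℝ) := s ∩ (fun q => fderiv ℝ U q (0, 1)) ⁻¹' {x : ℝ | x ≠ 0} with hWdef
  have hWopen : IsOpen W := by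
    refine ContinuousOn.isOpen_inter_preimage ?_ hsOpen isOpen_ne
    exact hfdc.clm_apply continuousOn_const
  have hW0 : ((0 : ℝ), (0 : ℝ)) ∈ W := by
    refine ⟨hA0, ?_⟩
    show fderiv ℝ U ((0 : ℝ), (0 : ℝ)) (0, 1) ≠ 0
    rw [hD1]; exact hne
  have hsymm00 : Φ.symm (0, 0) = ((0 : ℝ), (0 : ℝ)) := by
    have := Φ.left_inv h00s
    rwa [hΦcoe, hh00] at this
  have hsymmK : ContinuousAt (fun t : ℝ => Φ.symm (t, 0)) 0 := by
    have h1 : ContinuousAt Φ.symm ((0 : ℝ), (0 : ℝ)) :=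
      Φ.symm.continuousAt (by rwa [OpenPartialHomeomorph.symm_source])
    have hk : ContinuousAt (fun t : ℝ => ((t, (0 : ℝ)))) 0 :=
      (continuous_id.prodMk continuous_const).continuousAt
    show ContinuousAt (Φ.symm ∘ fun t : ℝ => ((t, (0 : ℝ)))) 0
    exact ContinuousAt.comp (f := fun t : ℝ => ((t, (0 : ℝ)))) h1 hk
  have hG : {t : ℝ | (t, (0 : ℝ)) ∈ Φ.target ∧ Φ.symm (t, 0) ∈ W} ∈ nhds (0 : ℝ) := by
    refine Filter.inter_mem ?_ ?_
    · exact (continuous_id.prodMk continuous_const).continuousAt.preimage_mem_nhds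
        (Φ.open_target.mem_nhds h00t)
    · exact hsymmK.preimage_mem_nhds (hWopen.mem_nhds (by rw [hsymm00]; exact hW0))
  obtain ⟨ε, hεpos, hball⟩ := Metric.mem_nhds_iff.1 hG
  set Δ : ℝ := ε / 2 with hΔ
  have hΔpos : 0 < Δ := by positivity
  have hIccG : ∀ t ∈ Set.Icc (0 : ℝ) Δ, (t, (0 : ℝ)) ∈ Φ.target ∧ Φ.symm (t, 0) ∈ W := by
    intro t ht
    apply hball
    have habs : |t| < ε := by
      rw [abs_of_nonneg ht.1]
      have := ht.2
      rw [hΔ] at this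
      linarith
    simpa [Real.dist_eq] using habs
  set β : ℝ → ℝ := fun t => (Φ.symm (t, 0)).2 with hβ
  have hfix : ∀ t : ℝ, (t, (0 : ℝ)) ∈ Φ.target → Φ.symm (t, 0) = (t, β t) := by
    intro t htg
    have h1 : Φ (Φ.symm (t, 0)) = (t, 0) := Φ.right_inv htg
    rw [hΦcoe] at h1
    have h2 := congrArg Prod.fst h1
    exact Prod.ext h2 rfl
  have hsource : ∀ t : ℝ, (t, (0 : ℝ)) ∈ Φ.target → (t, β t) ∈ Φ.source := by
    intro t htg
    rw [← hfix t htg]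
    exact Φ.map_target htg
  have hUβ : ∀ t ∈ Set.Icc (0 : ℝ) Δ, U (t, β t) = 0 := by
    intro t ht
    have h1 : Φ (Φ.symm (t, 0)) = (t, 0) := Φ.right_inv (hIccG t ht).1
    rw [hΦcoe, hfix t (hIccG t ht).1] at h1
    exact congrArg Prod.snd h1
  have hβsm : ContDiffOn ℝ 1 β (Set.Icc (0 : ℝ) Δ) := by
    intro t ht
    apply ContDiffAt.contDiffWithinAt
    obtain ⟨htg, hqs, hqd⟩ := hIccG t ht
    obtain ⟨e', he'⟩ := exists_prod_equiv (fderiv ℝ U (Φ.symm (t, 0))) hqd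
    have hca : ContDiffAt ℝ ∞ U (Φ.symm (t, 0)) :=
      contDiffAt_U M L f g φm φn hf' hg' hqs
    have hhq : ContDiffAt ℝ ∞ h (Φ.symm (t, 0)) := contDiffAt_fst.prodMk hca
    have hhq' : HasFDerivAt h (e' : (ℝ × ℝ) →L[ℝ] ℝ × ℝ) (Φ.symm (t, 0)) := by
      rw [he']
      exact hasFDerivAt_fst.prodMk (hca.differentiableAt (by simp)).hasFDerivAt
    have hsymmC : ContDiffAt ℝ ∞ Φ.symm (t, 0) := by
      refine Φ.contDiffAt_symm (f₀' := e') htg ?_ ?_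
      · rw [hΦcoe]; exact hhq'
      · rw [hΦcoe]; exact hhq
    have hc1 : ContDiffAt ℝ 1 (fun t : ℝ => ((t, (0 : ℝ)))) t :=
      contDiffAt_id.prodMk contDiffAt_const
    exact contDiffAt_snd.comp t ((hsymmC.of_le one_le_inf).comp t hc1)
  have hβ0 : β 0 = 0 := by
    show (Φ.symm (0, 0)).2 = 0
    rw [hsymm00]
  refine ⟨Δ, hΔpos, β, ⟨hβsm, hβ0, fun t ht => hUβ t ht⟩, ?_⟩
  rintro β' ⟨hc', h0', hu'⟩
  haveI : PreconnectedSpace (Set.Icc (0 : ℝ) Δ) :=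
    Subtype.preconnectedSpace isPreconnected_Icc
  set S : Set (Set.Icc (0 : ℝ) Δ) := {x | β' ↑x = β ↑x} with hS
  have hclosed : IsClosed S :=
    isClosed_eq (ContinuousOn.restrict (hc'.continuousOn))
      (ContinuousOn.restrict (hβsm.continuousOn))
  have hVS : S = {x : Set.Icc (0 : ℝ) Δ | ((x : ℝ), β' ↑x) ∈ Φ.source} := by
    apply Set.Subset.antisymm
    · intro x hx
      have hxx : β' ↑x = β ↑x := hx
      show ((x : ℝ), β' ↑x) ∈ Φ.source
      rw [hxx]
      exact hsource ↑x (hIccG ↑x x.2).1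
    · intro x hx
      have hq : ((x : ℝ), β' ↑x) ∈ Φ.source := hx
      have hU' : U ((x : ℝ), β' ↑x) = 0 := hu' ↑x x.2
      have h1 : Φ ((x : ℝ), β' ↑x) = ((x : ℝ), (0 : ℝ)) := by
        rw [hΦcoe]
        show ((x : ℝ), U ((x : ℝ), β' ↑x)) = ((x : ℝ), (0 : ℝ))
        rw [hU']
      have h2 : Φ.symm ((x : ℝ), 0) = ((x : ℝ), β' ↑x) := by
        have h3 := Φ.left_inv hq
        rw [h1] at h3
        exact h3
      show β' ↑x = β ↑x
      rw [hfix ↑x (hIccG ↑x x.2).1] at h2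
      exact (congrArg Prod.snd h2).symm
  have hopen : IsOpen S := by
    rw [hVS]
    have hcont : Continuous (fun x : Set.Icc (0 : ℝ) Δ => ((x : ℝ), β' ↑x)) :=
      continuous_subtype_val.prodMk (ContinuousOn.restrict (hc'.continuousOn))
    exact Φ.open_source.preimage hcont
  have h0mem : (0 : ℝ) ∈ Set.Icc (0 : ℝ) Δ := ⟨le_refl 0, hΔpos.le⟩
  have hSne : S.Nonempty := ⟨⟨0, h0mem⟩, by show β' 0 = β 0; rw [h0', hβ0]⟩
  have hSuniv : S = Set.univ :=
    (isClopen_iff.1 ⟨hclosed, hopen⟩).resolve_left (Set.nonempty_iff_ne_empty.1 hSne)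
  intro t ht
  have hx : (⟨t, ht⟩ : Set.Icc (0 : ℝ) Δ) ∈ S := by rw [hSuniv]; trivial
  exact hx

end
end

section
/- Let φ : ℝ → ℝ^n be a smooth (at least three times continuously differentiable) solution of the gradient flow φ'(t) = -M(Lφ(t) + ∇f(φ(t))), with M symmetric positive semidefinite, L symmetric positive definite, and f smooth with bounded derivatives up to sufficient order on a neighborhood of the trajectory. Fix t_n, and for each Δt > 0 define the SVM corrector φ̂(Δt) using the data φ^{n-1} = φ(t_n − Δt), φ^n = φ(t_n). Then there exist constants C > 0 and Δt₀ > 0 such that ‖φ̂(Δt) − φ(t_n + Δt)‖ ≤ C Δt³ for all Δt ∈ (0, Δt₀]; consequently also |F(φ̂(Δt)) − F(φ(t_n + Δt))| ≤ C' Δt³ for some constant C'. -/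
open scoped RealInnerProductSpace
open Matrix

noncomputable section

/-! ### Auxiliary machinery -/

/-- The linear equivalence between matrices and continuous linear maps on `Vec n`. -/
def svmE {n : ℕ} : Matrix (Fin n) (Fin n) ℝ ≃ₗ[ℝ] (Vec n →L[ℝ] Vec n) :=
  (Matrix.toEuclideanLin (𝕜 := ℝ) (m := Fin n) (n := Fin n)).trans
    LinearMap.toContinuousLinearMap

/-- Matrix action as a continuous linear map valued in continuous linear maps. -/
def svmT {n : ℕ} : Matrix (Fin n) (Fin n) ℝ →L[ℝ] (Vec n →L[ℝ] Vec n) :=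
  LinearMap.toContinuousLinearMap (svmE (n := n)).toLinearMap

lemma svmT_apply {n : ℕ} (A : Matrix (Fin n) (Fin n) ℝ) (x : Vec n) : svmT A x = mv A x := rfl

lemma svmT_mul {n : ℕ} (A B : Matrix (Fin n) (Fin n) ℝ) : svmT (A * B) = svmT A * svmT B := by
  ext x
  simp [svmT_apply, mv, Matrix.toEuclideanLin_apply, Matrix.mulVec_mulVec,
    ContinuousLinearMap.mul_apply]

lemma svmT_one {n : ℕ} : (svmT : Matrix (Fin n) (Fin n) ℝ →L[ℝ] _) 1 = 1 := by
  ext x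
  simp [svmT_apply, mv, Matrix.toEuclideanLin_apply, ContinuousLinearMap.one_apply]

lemma svmT_eq_svmE {n : ℕ} (A : Matrix (Fin n) (Fin n) ℝ) : svmT A = svmE A := rfl

lemma svm_unit {n : ℕ} {A : Matrix (Fin n) (Fin n) ℝ} (h : IsUnit (svmT A)) :
    IsUnit A.det ∧ svmT A⁻¹ = Ring.inverse (svmT A) := by
  obtain ⟨u, hu⟩ := h
  set B := (svmE (n := n)).symm ((u⁻¹ : _) : Vec n →L[ℝ] Vec n) with hB
  have hAB : A * B = 1 := by
    apply (svmE (n := n)).injective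
    rw [← svmT_eq_svmE, ← svmT_eq_svmE, svmT_mul, svmT_one]
    rw [svmT_eq_svmE B, hB, LinearEquiv.apply_symm_apply, ← hu]
    exact u.mul_inv
  have hA : IsUnit A := (Matrix.isUnit_iff_isUnit_det A).mpr (Matrix.isUnit_det_of_right_inverse hAB)
  have hdet : IsUnit A.det := (Matrix.isUnit_iff_isUnit_det A).mp hA
  refine ⟨hdet, ?_⟩
  have h1 : svmT A * svmT A⁻¹ = 1 := by
    rw [← svmT_mul, Matrix.mul_nonsing_inv A hdet, svmT_one]
  have h2 : svmT A⁻¹ * svmT A = 1 := by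
    rw [← svmT_mul, Matrix.nonsing_inv_mul A hdet, svmT_one]
  rw [show svmT A = ((⟨svmT A, svmT A⁻¹, h1, h2⟩ : (Vec n →L[ℝ] Vec n)ˣ) : _) from rfl,
    Ring.inverse_unit]
  rfl

set_option maxHeartbeats 4000000 in
/-- Local truncation error of the SVM corrector.
If `φ` is a (three times continuously differentiable) exact solution of the gradient flow
`φ' = −M(Lφ + ∇f(φ))`, and the corrector `φ̂(Δt)` is built from the data
`φⁿ⁻¹ = φ(tₙ − Δt)`, `φⁿ = φ(tₙ)`, then `φ̂(Δt) = φ(tₙ + Δt) + O(Δt³)` and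
`F(φ̂(Δt)) = F(φ(tₙ + Δt)) + O(Δt³)`. -/
theorem svm_corrector_third_order {n : ℕ}
    (M L : Matrix (Fin n) (Fin n) ℝ) (hM : M.PosSemidef) (hL : L.PosDef)
    (f : Vec n → ℝ) (hf : ContDiff ℝ (⊤ : ℕ∞) f)
    (φ : ℝ → Vec n) (hφ : ContDiff ℝ 3 φ)
    (hflow : ∀ t : ℝ, HasDerivAt φ (-(mv M (mv L (φ t) + gradient f (φ t)))) t)
    (tn : ℝ) :
    ∃ C > (0 : ℝ), ∃ Δt₀ > (0 : ℝ),
      (∀ Δt ∈ Set.Ioc (0 : ℝ) Δt₀,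
        ‖phiHat M L f (φ (tn - Δt)) (φ tn) Δt - φ (tn + Δt)‖ ≤ C * Δt ^ 3) ∧
      ∃ C' > (0 : ℝ), ∀ Δt ∈ Set.Ioc (0 : ℝ) Δt₀,
        |freeEnergy L f (phiHat M L f (φ (tn - Δt)) (φ tn) Δt)
          - freeEnergy L f (φ (tn + Δt))| ≤ C' * Δt ^ 3 := by
  classical
  -- notation
  set Mc : Vec n →L[ℝ] Vec n := svmT M with hMcdef
  set Lc : Vec n →L[ℝ] Vec n := svmT L with hLcdef
  set NC : Vec n →L[ℝ] Vec n := svmT (M * L) with hNCdef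
  have hNC : NC = Mc * Lc := svmT_mul M L
  set g : Vec n → Vec n := gradient f with hgdef
  have hf' : ContDiff ℝ ((⊤:ℕ∞) : WithTop ℕ∞) f := hf.of_le (by simp)
  have hg : ContDiff ℝ ((⊤:ℕ∞) : WithTop ℕ∞) g := by
    have h := hf'.fderiv_right (m := (⊤:ℕ∞)) le_rfl
    exact (InnerProductSpace.toDual ℝ (Vec n)).symm.contDiff.comp h
  set Dg : Vec n → (Vec n →L[ℝ] Vec n) := fderiv ℝ g with hDgdef
  have hDg : ContDiff ℝ ((⊤:ℕ∞) : WithTop ℕ∞) Dg := hg.fderiv_right (m := (⊤:ℕ∞)) le_rfl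
  have hgd : ∀ x, HasFDerivAt g (Dg x) x := fun x =>
    (hg.differentiable (by simp) x).hasFDerivAt
  set F0 : Vec n → Vec n := fun x => -(Mc (Lc x + g x)) with hF0def
  have hF0 : ContDiff ℝ ((⊤:ℕ∞) : WithTop ℕ∞) F0 :=
    (Mc.contDiff.comp (Lc.contDiff.add hg)).neg
  have hF0d : ∀ x, HasFDerivAt F0 (-(Mc.comp (Lc + Dg x))) x := by
    intro x
    exact (Mc.hasFDerivAt.comp x ((Lc.hasFDerivAt.add (hgd x)))).neg
  have hflow' : ∀ t, HasDerivAt φ (F0 (φ t)) t := hflow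
  set ψ : ℝ → Vec n := fun t => φ (tn + t) with hψdef
  set χ : ℝ → Vec n := fun t => φ (tn - t) with hχdef
  have hψ3 : ContDiff ℝ 3 ψ := hφ.comp (contDiff_const.add contDiff_id)
  have hχ3 : ContDiff ℝ 3 χ := hφ.comp (contDiff_const.sub contDiff_id)
  have hψd : ∀ t, HasDerivAt ψ (F0 (ψ t)) t := by
    intro t
    have := (hflow' (tn + t)).scomp t ((hasDerivAt_id t).const_add tn)
    simpa [Function.comp_def] using this
  have hχd : ∀ t, HasDerivAt χ (-F0 (χ t)) t := by
    intro t
    have := (hflow' (tn - t)).scomp t ((hasDerivAt_id t).const_sub tn)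
    simpa [Function.comp_def] using this
  have hψ0 : ψ 0 = φ tn := by simp [hψdef]
  have hχ0 : χ 0 = φ tn := by simp [hχdef]
  set v : ℝ → Vec n := fun t => F0 (ψ t) with hvdef
  set bb : ℝ → Vec n := fun t => (1/2 : ℝ) • ((3 : ℝ) • φ tn - χ t) with hbbdef
  have hbb3 : ContDiff ℝ 3 bb := (contDiff_const.sub hχ3).const_smul _
  have hbbd : ∀ t, HasDerivAt bb ((1/2 : ℝ) • F0 (χ t)) t := by
    intro t
    have := ((hχd t).const_sub ((3:ℝ) • φ tn)).const_smul (1/2 : ℝ)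
    rw [neg_neg] at this
    exact this
  have hbb0 : bb 0 = φ tn := by
    rw [hbbdef]; simp only [hχ0]
    module
  -- the resolvent
  set S : ℝ → (Vec n →L[ℝ] Vec n) := fun t => 1 + (t/2) • NC with hSdef
  set R : ℝ → (Vec n →L[ℝ] Vec n) := fun t => Ring.inverse (S t) with hRdef
  set δ₁ : ℝ := 1/(‖NC‖+1) with hδ₁def
  have hδ₁ : 0 < δ₁ := by positivity
  set U : Set ℝ := Metric.ball (0:ℝ) δ₁ with hUdef
  have hUopen : IsOpen U := Metric.isOpen_ball
  have hU0 : (0:ℝ) ∈ U := by simp [hUdef, hδ₁]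
  have hUnhds : U ∈ nhds (0:ℝ) := hUopen.mem_nhds hU0
  have habs : ∀ t ∈ U, |t| < δ₁ := by
    intro t ht
    simpa [hUdef, Real.dist_eq] using ht
  have hUnit : ∀ t ∈ U, IsUnit (S t) := by
    intro t ht
    have h0 : |t| * (‖NC‖ + 1) < 1 := by
      have := habs t ht
      rw [hδ₁def, lt_div_iff₀ (by positivity)] at this
      linarith
    have hn : ‖-((t/2) • NC)‖ < 1 := by
      rw [norm_neg, norm_smul (t/2) NC, Real.norm_eq_abs, abs_div]
      have h2 : (0:ℝ) ≤ |t| := abs_nonneg t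
      have h3 : (0:ℝ) ≤ ‖NC‖ := norm_nonneg NC
      rw [abs_two]
      nlinarith
    have hiu : IsUnit (1 - -((t/2) • NC)) := ⟨Units.oneSub _ hn, rfl⟩
    rw [sub_neg_eq_add] at hiu
    exact hiu
  have hS0 : S 0 = 1 := by
    show (1 : Vec n →L[ℝ] Vec n) + ((0:ℝ)/2) • NC = 1
    rw [show ((0:ℝ)/2) = 0 by norm_num, zero_smul ℝ NC, add_zero]
  have hR0 : R 0 = 1 := by
    show Ring.inverse (S 0) = 1
    rw [hS0, Ring.inverse_one]
  -- identification of the matrix inverse with the ring inverse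
  have hmat : ∀ t ∈ U, svmT (svmInv M L t) = R t := by
    intro t ht
    have hst : svmT (1 + (t/2) • (M * L)) = S t := by
      rw [map_add, _root_.map_smul, svmT_one, ← hNCdef]
    have hu : IsUnit (svmT (1 + (t/2) • (M * L))) := by rw [hst]; exact hUnit t ht
    have h2 := (svm_unit hu).2
    show svmT ((1 + (t/2) • (M * L))⁻¹) = R t
    rw [h2, hst, hRdef]
  have hmv : ∀ t ∈ U, ∀ y, mv (svmInv M L t) y = R t y := by
    intro t ht y
    rw [← svmT_apply, hmat t ht]
  -- the predictor
  set w : ℝ → Vec n := fun t => φ tn - (t/2) • (Mc (g (bb t))) with hwdef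
  set p : ℝ → Vec n := fun t => R t (w t) with hpdef
  have hpeq : ∀ t ∈ U, phiTilde M L f (φ (tn - t)) (φ tn) t = p t := by
    intro t ht
    show mv (svmInv M L t) (φ tn - (t/2) • mv M (g (phiBar (φ (tn - t)) (φ tn)))) = p t
    rw [hmv t ht]
    rfl
  set q : ℝ → Vec n := fun t => Mc (g (p t)) with hqdef
  set r : ℝ → Vec n := fun t => φ tn - ψ t - (t/2) • (NC (φ tn) + NC (ψ t)) - t • q t
    with hrdef
  have hRS : ∀ t ∈ U, ∀ y, R t (S t y) = y := by
    intro t ht y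
    have hc : R t * S t = 1 := by rw [hRdef]; exact Ring.inverse_mul_cancel _ (hUnit t ht)
    calc R t (S t y) = (R t * S t) y := rfl
      _ = y := by rw [hc]; rfl
  have hkey : ∀ t ∈ U, phiHat M L f (φ (tn - t)) (φ tn) t - ψ t = R t (r t) := by
    intro t ht
    have h1 : svmT (1 - (t/2) • (M * L)) = 1 - (t/2) • NC := by
      rw [map_sub, _root_.map_smul, svmT_one, hNCdef]
    have hArg : mv (1 - (t/2) • (M * L)) (φ tn)
          - t • mv M (g (phiTilde M L f (φ (tn - t)) (φ tn) t))
        = r t + S t (ψ t) := by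
      rw [← svmT_apply, h1, hpeq t ht]
      show (1 - (t/2) • NC) (φ tn) - t • Mc (g (p t)) = r t + S t (ψ t)
      rw [hrdef, hSdef]
      simp only [ContinuousLinearMap.sub_apply, ContinuousLinearMap.smul_apply,
        ContinuousLinearMap.one_apply, ContinuousLinearMap.add_apply, hqdef]
      module
    show mv (svmInv M L t) _ - ψ t = R t (r t)
    rw [hmv t ht, hArg, map_add, hRS t ht]
    abel
  -- smoothness of R on U
  have hRsm : ∀ t ∈ U, ContDiffAt ℝ 3 R t := by
    intro t ht
    obtain ⟨u, hu⟩ := hUnit t ht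
    have h1 : ContDiffAt ℝ 3 (Ring.inverse : (Vec n →L[ℝ] Vec n) → _) (S t) := by
      rw [← hu]; exact contDiffAt_ringInverse (𝕜 := ℝ) u
    have h2 : ContDiffAt ℝ 3 S t :=
      (contDiff_const.add ((contDiff_id.div_const 2).smul contDiff_const)).contDiffAt
    exact h1.comp t h2
  have hSd : ∀ t : ℝ, HasDerivAt S ((1/2:ℝ) • NC) t := by
    intro t
    have := (((hasDerivAt_id t).div_const 2).smul_const NC).const_add
      (1 : Vec n →L[ℝ] Vec n)
    exact this
  set Rd : ℝ → (Vec n →L[ℝ] Vec n) := fun t => -(R t * ((1/2:ℝ) • NC) * R t) with hRddef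
  have hRd : ∀ t ∈ U, HasDerivAt R (Rd t) t := by
    intro t ht
    obtain ⟨u, hu⟩ := hUnit t ht
    have hRu : R t = ↑u⁻¹ := by
      show Ring.inverse (S t) = _
      rw [← hu, Ring.inverse_unit]
    have h1 := hasFDerivAt_ringInverse (𝕜 := ℝ) u
    rw [hu] at h1
    have h2 := h1.comp_hasDerivAt t (hSd t)
    refine h2.congr_deriv ?_
    simp only [hRddef, ContinuousLinearMap.neg_apply,
      ContinuousLinearMap.mulLeftRight_apply, hRu]
  -- derivative of w
  set wd : ℝ → Vec n := fun t =>
      -((t/2) • (Mc (Dg (bb t) ((1/2:ℝ) • F0 (χ t)))) + (1/2:ℝ) • (Mc (g (bb t)))) with hwddef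
  have hwd : ∀ t : ℝ, HasDerivAt w (wd t) t := by
    intro t
    have hh : HasDerivAt (fun s => Mc (g (bb s))) (Mc (Dg (bb t) ((1/2:ℝ) • F0 (χ t)))) t :=
      Mc.hasFDerivAt.comp_hasDerivAt t ((hgd (bb t)).comp_hasDerivAt t (hbbd t))
    exact (((hasDerivAt_id t).div_const 2).smul hh).const_sub (φ tn)
  -- derivative of p
  set pd : ℝ → Vec n := fun t => Rd t (w t) + R t (wd t) with hpddef
  have hpd : ∀ t ∈ U, HasDerivAt p (pd t) t := fun t ht => (hRd t ht).clm_apply (hwd t)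
  -- derivative of q
  set qd : ℝ → Vec n := fun t => Mc (Dg (p t) (pd t)) with hqddef
  have hqd : ∀ t ∈ U, HasDerivAt q (qd t) t := fun t ht =>
    Mc.hasFDerivAt.comp_hasDerivAt t ((hgd (p t)).comp_hasDerivAt t (hpd t ht))
  -- derivative of r
  set r1 : ℝ → Vec n := fun t =>
      -(v t) - ((t/2) • (NC (v t)) + (1/2:ℝ) • (NC (φ tn) + NC (ψ t))) - (t • qd t + (1:ℝ) • q t)
    with hr1def
  have hr1 : ∀ t ∈ U, HasDerivAt r (r1 t) t := by
    intro t ht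
    have h1 : HasDerivAt (fun s => φ tn - ψ s) (-(v t)) t := (hψd t).const_sub (φ tn)
    have h2 : HasDerivAt (fun s => NC (φ tn) + NC (ψ s)) (NC (v t)) t :=
      (NC.hasFDerivAt.comp_hasDerivAt t (hψd t)).const_add (NC (φ tn))
    have h3 : HasDerivAt (fun s => (s/2) • (NC (φ tn) + NC (ψ s)))
        ((t/2) • (NC (v t)) + (1/2:ℝ) • (NC (φ tn) + NC (ψ t))) t :=
      ((hasDerivAt_id t).div_const 2).smul h2
    have h4 : HasDerivAt (fun s => s • q s) (t • qd t + (1:ℝ) • q t) t :=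
      (hasDerivAt_id t).smul (hqd t ht)
    exact (h1.sub h3).sub h4
  -- values at 0
  have hw0 : w 0 = φ tn := by
    show φ tn - ((0:ℝ)/2) • (Mc (g (bb 0))) = φ tn
    rw [show ((0:ℝ)/2) = 0 by norm_num, zero_smul ℝ, sub_zero]
  have hp0 : p 0 = φ tn := by
    show R 0 (w 0) = φ tn
    rw [hR0, hw0]
    rfl
  have hv0 : v 0 = F0 (φ tn) := by show F0 (ψ 0) = _; rw [hψ0]
  have hq0 : q 0 = Mc (g (φ tn)) := by show Mc (g (p 0)) = _; rw [hp0]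
  have hNCapp : ∀ x, NC x = Mc (Lc x) := by intro x; rw [hNC]; rfl
  have hr0 : r 0 = 0 := by
    show φ tn - ψ 0 - ((0:ℝ)/2) • (NC (φ tn) + NC (ψ 0)) - (0:ℝ) • q 0 = 0
    rw [hψ0, show ((0:ℝ)/2) = 0 by norm_num, zero_smul ℝ, zero_smul ℝ]
    abel
  have hr1zero : r1 0 = 0 := by
    show -(v 0) - (((0:ℝ)/2) • (NC (v 0)) + (1/2:ℝ) • (NC (φ tn) + NC (ψ 0)))
        - ((0:ℝ) • qd 0 + (1:ℝ) • q 0) = 0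
    rw [hψ0, hv0, hq0, show ((0:ℝ)/2) = 0 by norm_num, zero_smul ℝ, zero_smul ℝ, one_smul,
      hNCapp (φ tn)]
    show -(-(Mc (Lc (φ tn) + g (φ tn)))) - (0 + (1/2:ℝ) • (Mc (Lc (φ tn)) + Mc (Lc (φ tn))))
        - (0 + Mc (g (φ tn))) = 0
    rw [map_add Mc]
    module
  -- values of the derivative pieces at 0
  have hwd0 : wd 0 = -((1/2:ℝ) • (Mc (g (φ tn)))) := by
    show -(((0:ℝ)/2) • (Mc (Dg (bb 0) ((1/2:ℝ) • F0 (χ 0)))) + (1/2:ℝ) • (Mc (g (bb 0)))) = _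
    rw [hbb0, show ((0:ℝ)/2) = 0 by norm_num, zero_smul ℝ, zero_add]
  have hRd0 : Rd 0 = -((1/2:ℝ) • NC) := by
    show -(R 0 * ((1/2:ℝ) • NC) * R 0) = _
    rw [hR0, one_mul, mul_one]
  have hpd0 : pd 0 = (1/2:ℝ) • v 0 := by
    show Rd 0 (w 0) + R 0 (wd 0) = _
    rw [hRd0, hw0, hR0, hwd0, hv0]
    show -((1/2:ℝ) • NC) (φ tn) + (1 : Vec n →L[ℝ] Vec n) (-((1/2:ℝ) • (Mc (g (φ tn)))))
        = (1/2:ℝ) • F0 (φ tn)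
    rw [ContinuousLinearMap.smul_apply, ContinuousLinearMap.one_apply, hNCapp (φ tn)]
    show _ = (1/2:ℝ) • (-(Mc (Lc (φ tn) + g (φ tn))))
    rw [map_add Mc]
    module
  have hqd0val : qd 0 = (1/2:ℝ) • (Mc (Dg (φ tn) (F0 (φ tn)))) := by
    show Mc (Dg (p 0) (pd 0)) = _
    rw [hp0, hpd0, hv0, _root_.map_smul, _root_.map_smul]
  -- derivative of v at 0
  have hvd0 : HasDerivAt v ((-(Mc.comp (Lc + Dg (φ tn)))) (F0 (φ tn))) 0 := by
    have := (hF0d (ψ 0)).comp_hasDerivAt 0 (hψd 0)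
    rwa [hψ0] at this
  set Xv : Vec n := (-(Mc.comp (Lc + Dg (φ tn)))) (F0 (φ tn)) with hXvdef
  -- differentiability of qd at 0
  have hdifftop : ∀ (u : Vec n → Vec n), ContDiff ℝ ((⊤:ℕ∞) : WithTop ℕ∞) u →
      ∀ x, DifferentiableAt ℝ u x := fun u hu x =>
    (hu.differentiable (by simp)).differentiableAt
  have hDiff_p : DifferentiableAt ℝ p 0 := (hpd 0 hU0).differentiableAt
  have hDiff_R : DifferentiableAt ℝ R 0 := (hRd 0 hU0).differentiableAt
  have hDiff_Rd : DifferentiableAt ℝ Rd 0 :=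
    ((hDiff_R.mul (differentiableAt_const ((1/2:ℝ) • NC))).mul hDiff_R).neg
  have hDiff_w : DifferentiableAt ℝ w 0 := (hwd 0).differentiableAt
  have hDiff_bb : DifferentiableAt ℝ bb 0 := (hbbd 0).differentiableAt
  have hDiff_χ : DifferentiableAt ℝ χ 0 := (hχd 0).differentiableAt
  have hDiff_wd : DifferentiableAt ℝ wd 0 := by
    have h1 : DifferentiableAt ℝ (fun t => Dg (bb t) ((1/2:ℝ) • F0 (χ t))) 0 := by
      apply DifferentiableAt.clm_apply
      · exact ((hDg.differentiable (by simp)) (bb 0)).comp 0 hDiff_bb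
      · exact (((hF0.differentiable (by simp)) (χ 0)).comp 0
          hDiff_χ).const_smul (1/2:ℝ)
    have h2 : DifferentiableAt ℝ (fun t => Mc (Dg (bb t) ((1/2:ℝ) • F0 (χ t)))) 0 :=
      (Mc.differentiable.differentiableAt).comp 0 h1
    have h3 : DifferentiableAt ℝ (fun t => Mc (g (bb t))) 0 :=
      (Mc.differentiable.differentiableAt).comp 0
        (((hg.differentiable (by simp)) (bb 0)).comp 0 hDiff_bb)
    exact (((differentiableAt_id.div_const 2).smul h2).add (h3.const_smul (1/2:ℝ))).neg
  have hDiff_pd : DifferentiableAt ℝ pd 0 :=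
    (hDiff_Rd.clm_apply hDiff_w).add (hDiff_R.clm_apply hDiff_wd)
  have hDiff_qd : DifferentiableAt ℝ qd 0 := by
    have h1 : DifferentiableAt ℝ (fun t => Dg (p t) (pd t)) 0 :=
      DifferentiableAt.clm_apply
        (((hDg.differentiable (by simp)) (p 0)).comp 0 hDiff_p) hDiff_pd
    exact (Mc.differentiable.differentiableAt).comp 0 h1
  have hqdd0 : HasDerivAt qd (deriv qd 0) 0 := hDiff_qd.hasDerivAt
  -- derivative of r1 at 0 vanishes
  have hr1d0 : HasDerivAt r1 0 0 := by
    have hA : HasDerivAt (fun t => -(v t)) (-Xv) 0 := hvd0.neg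
    have hNCv : HasDerivAt (fun t => NC (v t)) (NC Xv) 0 :=
      NC.hasFDerivAt.comp_hasDerivAt 0 hvd0
    have b1 : HasDerivAt (fun t => (t/2) • (NC (v t)))
        (((0:ℝ)/2) • (NC Xv) + (1/2:ℝ) • (NC (v 0))) 0 :=
      ((hasDerivAt_id 0).div_const 2).smul hNCv
    have b2 : HasDerivAt (fun t => (1/2:ℝ) • (NC (φ tn) + NC (ψ t)))
        ((1/2:ℝ) • (NC (F0 (φ tn)))) 0 := by
      have := ((NC.hasFDerivAt.comp_hasDerivAt 0 (hψd 0)).const_add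
        (NC (φ tn))).const_smul (1/2:ℝ)
      rwa [hψ0] at this
    have hB := b1.add b2
    have c1 : HasDerivAt (fun t => t • qd t) ((0:ℝ) • deriv qd 0 + (1:ℝ) • qd 0) 0 :=
      (hasDerivAt_id 0).smul hqdd0
    have c2 : HasDerivAt (fun t => (1:ℝ) • q t) ((1:ℝ) • qd 0) 0 :=
      (hqd 0 hU0).const_smul (1:ℝ)
    have hC := c1.add c2
    have htot := (hA.sub hB).sub hC
    have hzero : -Xv - ((((0:ℝ)/2) • (NC Xv) + (1/2:ℝ) • (NC (v 0)))
        + (1/2:ℝ) • (NC (F0 (φ tn)))) - (((0:ℝ) • deriv qd 0 + (1:ℝ) • qd 0)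
        + (1:ℝ) • qd 0) = 0 := by
      rw [hv0, hqd0val, hXvdef, show ((0:ℝ)/2) = 0 by norm_num, zero_smul ℝ, zero_smul ℝ,
        ContinuousLinearMap.neg_apply, ContinuousLinearMap.comp_apply,
        ContinuousLinearMap.add_apply, hNCapp, map_add Mc]
      module
    rw [hzero] at htot
    exact htot
  -- C^3 smoothness of r on U
  have h3top : (3 : WithTop ℕ∞) ≤ ((⊤:ℕ∞) : WithTop ℕ∞) := by
    norm_cast
  have hg3 : ContDiff ℝ 3 g := hg.of_le h3top
  have hw3 : ContDiff ℝ 3 w :=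
    contDiff_const.sub ((contDiff_id.div_const 2).smul (Mc.contDiff.comp (hg3.comp hbb3)))
  have hR3 : ContDiffOn ℝ 3 R U := fun t ht => (hRsm t ht).contDiffWithinAt
  have hp3 : ContDiffOn ℝ 3 p U := hR3.clm_apply hw3.contDiffOn
  have hq3 : ContDiffOn ℝ 3 q U := (Mc.contDiff.comp hg3).comp_contDiffOn hp3
  have hr3 : ContDiffOn ℝ 3 r U := by
    refine ContDiffOn.sub (ContDiffOn.sub ?_ ?_) ?_
    · exact (contDiff_const.sub hψ3).contDiffOn
    · exact ((contDiff_id.div_const 2).smul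
        (contDiff_const.add (NC.contDiff.comp hψ3))).contDiffOn
    · exact contDiff_id.contDiffOn.smul hq3
  -- extract second derivative
  have h23 : (3 : WithTop ℕ∞) = 2 + 1 := by norm_num
  have h12 : (2 : WithTop ℕ∞) = 1 + 1 := by norm_num
  have hderiv_r : ∀ t ∈ U, deriv r t = r1 t := fun t ht => (hr1 t ht).deriv
  obtain ⟨hdiff_r, -, hd2⟩ := (contDiffOn_succ_iff_deriv_of_isOpen hUopen).mp (h23 ▸ hr3)
  have hr1_2 : ContDiffOn ℝ 2 r1 U := hd2.congr fun t ht => (hderiv_r t ht).symm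
  obtain ⟨hdiff_r1, -, hd22⟩ :=
    (contDiffOn_succ_iff_deriv_of_isOpen hUopen).mp (h12 ▸ hr1_2)
  set r2 : ℝ → Vec n := deriv r1 with hr2def
  have hr2_1 : ContDiffOn ℝ 1 r2 U := hd22
  have hr2_0 : r2 0 = 0 := hr1d0.deriv
  -- Lipschitz bound for r2 near 0
  obtain ⟨K, s₀, hs₀, hlip⟩ := (hr2_1.contDiffAt hUnhds).exists_lipschitzOnWith
  obtain ⟨δ₂, hδ₂pos, hball⟩ := Metric.mem_nhds_iff.mp (Filter.inter_mem hUnhds hs₀)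
  have h0s : (0:ℝ) ∈ s₀ := mem_of_mem_nhds hs₀
  have hr2bound : ∀ x ∈ Metric.ball (0:ℝ) δ₂, ‖r2 x‖ ≤ (K:ℝ) * |x| := by
    intro x hx
    have hx' := hball hx
    have h1 := hlip.dist_le_mul x hx'.2 0 h0s
    rw [hr2_0, dist_zero_right, dist_zero_right, Real.norm_eq_abs] at h1
    exact h1
  -- first mean value estimate : ‖r1‖ ≤ K/2 x²
  set b : ℝ := δ₂/2 with hbdef
  have hbpos : 0 < b := by positivity
  have hIccball : Set.Icc (0:ℝ) b ⊆ Metric.ball 0 δ₂ := by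
    intro x hx
    rw [Metric.mem_ball, Real.dist_eq, sub_zero]
    rw [abs_of_nonneg hx.1]
    calc x ≤ b := hx.2
      _ < δ₂ := by rw [hbdef]; linarith
  have hIccU : Set.Icc (0:ℝ) b ⊆ U := fun x hx => (hball (hIccball hx)).1
  have hr1bound : ∀ x ∈ Set.Icc (0:ℝ) b, ‖r1 x‖ ≤ (K:ℝ)/2 * x^2 := by
    have hBd : ∀ x : ℝ, HasDerivAt (fun y => (K:ℝ)/2 * y^2) ((K:ℝ) * x) x := by
      intro x
      have := (hasDerivAt_pow 2 x).const_mul ((K:ℝ)/2)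
      refine this.congr_deriv ?_
      simp only [show (2:ℕ) - 1 = 1 from rfl, pow_one, Nat.cast_ofNat]; ring
    intro x hx
    refine image_norm_le_of_norm_deriv_right_le_deriv_boundary (f' := r2)
      ((hdiff_r1.continuousOn).mono hIccU) ?_ ?_ hBd ?_ hx
    · intro y hy
      exact ((hdiff_r1.differentiableAt
        (hUopen.mem_nhds (hIccU ⟨hy.1, le_of_lt hy.2⟩))).hasDerivAt).hasDerivWithinAt
    · rw [hr1zero, norm_zero]
      positivity
    · intro y hy
      have := hr2bound y (hIccball ⟨hy.1, le_of_lt hy.2⟩)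
      rwa [abs_of_nonneg hy.1] at this
  -- second mean value estimate : ‖r‖ ≤ K/6 x³
  have hrbound : ∀ x ∈ Set.Icc (0:ℝ) b, ‖r x‖ ≤ (K:ℝ)/6 * x^3 := by
    have hBd : ∀ x : ℝ, HasDerivAt (fun y => (K:ℝ)/6 * y^3) ((K:ℝ)/2 * x^2) x := by
      intro x
      have := (hasDerivAt_pow 3 x).const_mul ((K:ℝ)/6)
      refine this.congr_deriv ?_
      simp only [show (3:ℕ) - 1 = 2 from rfl, Nat.cast_ofNat]; ring
    intro x hx
    refine image_norm_le_of_norm_deriv_right_le_deriv_boundary (f' := r1)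
      ((hr3.continuousOn).mono hIccU) ?_ ?_ hBd ?_ hx
    · intro y hy
      exact (hr1 y (hIccU ⟨hy.1, le_of_lt hy.2⟩)).hasDerivWithinAt
    · rw [hr0, norm_zero]
      positivity
    · intro y hy
      exact hr1bound y ⟨hy.1, le_of_lt hy.2⟩
  -- bound on the resolvent norm
  have hRcont : ContinuousAt R 0 := (hRsm 0 hU0).continuousAt
  have hR2ev : ∀ᶠ t in nhds (0:ℝ), ‖R t‖ ≤ 2 := by
    have h1 : ∀ᶠ t in nhds (0:ℝ), R t ∈ Metric.ball (R 0) 1 :=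
      hRcont (Metric.ball_mem_nhds _ one_pos)
    filter_upwards [h1] with t ht
    have h2 : ‖R t - R 0‖ < 1 := by
      rw [← dist_eq_norm]; exact ht
    have h3 : ‖R 0‖ ≤ 1 := by
      rw [hR0]
      exact ContinuousLinearMap.norm_id_le
    calc ‖R t‖ = ‖R 0 + (R t - R 0)‖ := by rw [add_sub_cancel]
      _ ≤ ‖R 0‖ + ‖R t - R 0‖ := norm_add_le _ _
      _ ≤ 2 := by linarith
  obtain ⟨δ₃, hδ₃pos, hR2'⟩ := Metric.eventually_nhds_iff.mp hR2ev
  -- free energy is C¹, Lipschitz on a ball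
  have hFE : ContDiff ℝ 1 (freeEnergy L f) := by
    have h1 : ContDiff ℝ 1 (fun x : Vec n => (1/2:ℝ) * ⟪x, Lc x⟫) :=
      contDiff_const.mul (ContDiff.inner (𝕜 := ℝ) contDiff_id Lc.contDiff)
    have h2 : ContDiff ℝ 1 f := hf.of_le (by norm_cast)
    show ContDiff ℝ 1 (fun x : Vec n => (1/2:ℝ) * ⟪x, mv L x⟫ + f x)
    exact h1.add h2
  obtain ⟨x₀, hx₀, hmax⟩ := (isCompact_closedBall (φ tn) 2).exists_isMaxOn
    ⟨φ tn, Metric.mem_closedBall_self (by norm_num)⟩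
    ((hFE.continuous_fderiv one_ne_zero).norm).continuousOn
  set K' : ℝ := ‖fderiv ℝ (freeEnergy L f) x₀‖ with hK'def
  have hK'0 : 0 ≤ K' := norm_nonneg _
  have hFlip : ∀ x ∈ Metric.closedBall (φ tn) 2, ∀ y ∈ Metric.closedBall (φ tn) 2,
      |freeEnergy L f x - freeEnergy L f y| ≤ K' * ‖x - y‖ := by
    intro x hx y hy
    have := Convex.norm_image_sub_le_of_norm_fderiv_le
      (fun z _ => (hFE.differentiable one_ne_zero) z)
      (fun z hz => hmax hz) (convex_closedBall _ _) hy hx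
    rwa [Real.norm_eq_abs] at this
  -- continuity of ψ near 0
  obtain ⟨δ₄, hδ₄pos, hψ1⟩ := Metric.eventually_nhds_iff.mp
    ((hψd 0).continuousAt (Metric.closedBall_mem_nhds (ψ 0) one_pos))
  -- the constants
  set C : ℝ := (K:ℝ)/3 + 1 with hCdef
  have hCpos : 0 < C := by positivity
  set δ₅ : ℝ := 1/(C+1) with hδ₅def
  have hδ₅pos : 0 < δ₅ := by positivity
  set Δt₀ : ℝ := min (min b (δ₃/2)) (min (δ₄/2) δ₅) with hΔt₀def
  have hΔt₀pos : 0 < Δt₀ := by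
    apply lt_min (lt_min hbpos (by positivity)) (lt_min (by positivity) hδ₅pos)
  -- main estimate
  have hmain : ∀ Δt ∈ Set.Ioc (0:ℝ) Δt₀,
      ‖phiHat M L f (φ (tn - Δt)) (φ tn) Δt - φ (tn + Δt)‖ ≤ C * Δt ^ 3 := by
    intro t ht
    obtain ⟨ht0, htΔ⟩ := ht
    have htb : t ∈ Set.Icc (0:ℝ) b :=
      ⟨le_of_lt ht0, le_trans htΔ (le_trans (min_le_left _ _) (min_le_left _ _))⟩
    have htU : t ∈ U := hIccU htb
    have hψt : φ (tn + t) = ψ t := rfl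
    rw [hψt, hkey t htU]
    have h1 : ‖R t (r t)‖ ≤ ‖R t‖ * ‖r t‖ := (R t).le_opNorm (r t)
    have h2 : ‖R t‖ ≤ 2 := by
      apply hR2'
      rw [Real.dist_eq, sub_zero, abs_of_nonneg (le_of_lt ht0)]
      calc t ≤ Δt₀ := htΔ
        _ ≤ δ₃/2 := le_trans (min_le_left _ _) (min_le_right _ _)
        _ < δ₃ := by linarith
    have h3 : ‖r t‖ ≤ (K:ℝ)/6 * t^3 := hrbound t htb
    calc ‖R t (r t)‖ ≤ ‖R t‖ * ‖r t‖ := h1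
      _ ≤ 2 * ((K:ℝ)/6 * t^3) := by
          apply mul_le_mul h2 h3 (norm_nonneg _) (by norm_num)
      _ = (K:ℝ)/3 * t^3 := by ring
      _ ≤ C * t ^ 3 := mul_le_mul_of_nonneg_right (by rw [hCdef]; linarith) (by positivity)
  refine ⟨C, hCpos, Δt₀, hΔt₀pos, hmain, (K' + 1) * C, by positivity, ?_⟩
  -- energy estimate
  intro t ht
  obtain ⟨ht0, htΔ⟩ := ht
  have hCt1 : C * t ^ 3 ≤ 1 := by
    have htδ₅ : t ≤ δ₅ := le_trans htΔ (le_trans (min_le_right _ _) (min_le_right _ _))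
    have hδ₅le1 : δ₅ ≤ 1 := by
      rw [hδ₅def]
      rw [div_le_one (by positivity)]
      linarith
    have ht1 : t ≤ 1 := le_trans htδ₅ hδ₅le1
    have h3 : t^3 ≤ t := by
      calc t^3 ≤ t^1 := pow_le_pow_of_le_one (le_of_lt ht0) ht1 (by norm_num)
        _ = t := pow_one t
    calc C * t^3 ≤ C * δ₅ :=
        mul_le_mul_of_nonneg_left (le_trans h3 htδ₅) (le_of_lt hCpos)
      _ = C / (C + 1) := by rw [hδ₅def]; ring
      _ ≤ 1 := by rw [div_le_one (by positivity)]; linarith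
  have hψt : φ (tn + t) = ψ t := rfl
  have hψclose : ‖ψ t - φ tn‖ ≤ 1 := by
    have := hψ1 (y := t) (by
      rw [Real.dist_eq, sub_zero, abs_of_nonneg (le_of_lt ht0)]
      calc t ≤ Δt₀ := htΔ
        _ ≤ δ₄/2 := le_trans (min_le_right _ _) (min_le_left _ _)
        _ < δ₄ := by linarith)
    rw [Metric.mem_closedBall, hψ0] at this
    rwa [← dist_eq_norm]
  have hhatclose : ‖phiHat M L f (φ (tn - t)) (φ tn) t - ψ t‖ ≤ 1 := by
    have := hmain t ⟨ht0, htΔ⟩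
    rw [hψt] at this
    exact le_trans this hCt1
  have hxmem : phiHat M L f (φ (tn - t)) (φ tn) t ∈ Metric.closedBall (φ tn) 2 := by
    rw [Metric.mem_closedBall, dist_eq_norm]
    calc ‖phiHat M L f (φ (tn - t)) (φ tn) t - φ tn‖
        ≤ ‖phiHat M L f (φ (tn - t)) (φ tn) t - ψ t‖ + ‖ψ t - φ tn‖ := by
          have := norm_sub_le_norm_sub_add_norm_sub
            (phiHat M L f (φ (tn - t)) (φ tn) t) (ψ t) (φ tn)
          exact this
      _ ≤ 2 := by linarith
  have hymem : φ (tn + t) ∈ Metric.closedBall (φ tn) 2 := by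
    rw [Metric.mem_closedBall, dist_eq_norm, hψt]
    linarith
  have := hFlip _ hxmem _ hymem
  calc |freeEnergy L f (phiHat M L f (φ (tn - t)) (φ tn) t) - freeEnergy L f (φ (tn + t))|
      ≤ K' * ‖phiHat M L f (φ (tn - t)) (φ tn) t - φ (tn + t)‖ := this
    _ ≤ K' * (C * t ^ 3) := by
        apply mul_le_mul_of_nonneg_left (hmain t ⟨ht0, htΔ⟩) hK'0
    _ ≤ (K' + 1) * (C * t ^ 3) :=
        mul_le_mul_of_nonneg_right (by linarith)
          (mul_nonneg (le_of_lt hCpos) (by positivity))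
    _ = (K' + 1) * C * t ^ 3 := by ring

end
end

section
/- Under the hypotheses of the β = O(Δt³) setting (φ a smooth exact solution of the gradient flow, φ^{n-1} = φ(t_n − Δt), φ^n = φ(t_n)), the function u satisfies u(Δt, 0) = F(φ̂(Δt)) − F̃(Δt) = O(Δt³): there exist C > 0 and Δt₀ > 0 such that |u(Δt, 0)| ≤ C Δt³ for all Δt ∈ (0, Δt₀]. -/
open scoped RealInnerProductSpace
open Matrix

noncomputable section

namespace SVMAux

attribute [local instance] Matrix.linftyOpNormedRing Matrix.linftyOpNormedAlgebra

variable {n : ℕ}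

/-- `mv` as a continuous-linear-map-valued continuous linear map. -/
def TL (n : ℕ) : Matrix (Fin n) (Fin n) ℝ →L[ℝ] (Vec n →L[ℝ] Vec n) :=
  LinearMap.toContinuousLinearMap
    ((LinearMap.toContinuousLinearMap.toLinearMap).comp (Matrix.toEuclideanLin.toLinearMap))

@[simp] lemma TL_apply (A : Matrix (Fin n) (Fin n) ℝ) (x : Vec n) : TL n A x = mv A x := rfl

lemma mv_one (x : Vec n) : mv (1 : Matrix (Fin n) (Fin n) ℝ) x = x := by
  simp [mv, Matrix.toEuclideanLin_apply, Matrix.one_mulVec]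

lemma mv_mul (A B : Matrix (Fin n) (Fin n) ℝ) (x : Vec n) : mv (A * B) x = mv A (mv B x) := by
  simp [mv, Matrix.toEuclideanLin_apply, Matrix.mulVec_mulVec]

lemma mv_smul_mat (c : ℝ) (A : Matrix (Fin n) (Fin n) ℝ) (x : Vec n) : mv (c • A) x = c • mv A x := by
  simp [mv, _root_.map_smul]

lemma mv_neg_mat (A : Matrix (Fin n) (Fin n) ℝ) (x : Vec n) : mv (-A) x = -mv A x := by
  simp [mv, map_neg]

lemma mv_add (A : Matrix (Fin n) (Fin n) ℝ) (x y : Vec n) : mv A (x + y) = mv A x + mv A y := by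
  simp [mv, map_add]

lemma mv_smul (A : Matrix (Fin n) (Fin n) ℝ) (c : ℝ) (x : Vec n) : mv A (c • x) = c • mv A x := by
  simp [mv, _root_.map_smul]

lemma mv_sub (A : Matrix (Fin n) (Fin n) ℝ) (x y : Vec n) : mv A (x - y) = mv A x - mv A y := by
  simp [mv, map_sub]

lemma mv_neg (A : Matrix (Fin n) (Fin n) ℝ) (x : Vec n) : mv A (-x) = -mv A x := by
  simp [mv, map_neg]

lemma mv_zero (A : Matrix (Fin n) (Fin n) ℝ) : mv A (0 : Vec n) = 0 := by
  simp [mv]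

lemma inner_mv_left {A : Matrix (Fin n) (Fin n) ℝ} (hA : A.IsHermitian) (x y : Vec n) :
    ⟪mv A x, y⟫ = ⟪x, mv A y⟫ :=
  (Matrix.isHermitian_iff_isSymmetric.1 hA) x y

end SVMAux
namespace SVMAux

attribute [local instance] Matrix.linftyOpNormedRing Matrix.linftyOpNormedAlgebra

variable {n : ℕ}

lemma hasDerivAt_mv {A : ℝ → Matrix (Fin n) (Fin n) ℝ} {x : ℝ → Vec n}
    {A' : Matrix (Fin n) (Fin n) ℝ} {x' : Vec n} {t : ℝ}
    (hA : HasDerivAt A A' t) (hx : HasDerivAt x x' t) :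
    HasDerivAt (fun s => mv (A s) (x s)) (mv A' (x t) + mv (A t) x') t := by
  have h1 : HasDerivAt (fun s => TL n (A s)) (TL n A') t :=
    (TL n).hasFDerivAt.comp_hasDerivAt t hA
  simpa using h1.clm_apply hx

lemma hasDerivAt_mv_const (A : Matrix (Fin n) (Fin n) ℝ) {x : ℝ → Vec n} {x' : Vec n} {t : ℝ}
    (hx : HasDerivAt x x' t) :
    HasDerivAt (fun s => mv A (x s)) (mv A x') t := by
  simpa [mv] using (hasDerivAt_mv (hasDerivAt_const t A) hx)

lemma contDiffOn_mv {A : ℝ → Matrix (Fin n) (Fin n) ℝ} {x : ℝ → Vec n} {s : Set ℝ}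
    (hA : ContDiffOn ℝ (⊤ : ℕ∞) A s) (hx : ContDiffOn ℝ (⊤ : ℕ∞) x s) :
    ContDiffOn ℝ (⊤ : ℕ∞) (fun t => mv (A t) (x t)) s := by
  have : ContDiffOn ℝ (⊤ : ℕ∞) (fun t => TL n (A t)) s := (TL n).contDiff.comp_contDiffOn hA
  exact this.clm_apply hx

lemma contDiff_gradient {f : Vec n → ℝ} (hf : ContDiff ℝ (⊤ : ℕ∞) f) : ContDiff ℝ (⊤ : ℕ∞) (gradient f) := by
  have h1 : ContDiff ℝ (⊤ : ℕ∞) (fderiv ℝ f) := hf.fderiv_right (by simp)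
  have h2 := ((InnerProductSpace.toDual ℝ (Vec n)).symm.toContinuousLinearEquiv
      : StrongDual ℝ (Vec n) ≃L[ℝ] Vec n).toContinuousLinearMap.contDiff.comp h1
  exact h2

lemma contDiff_gradient_fderiv {f : Vec n → ℝ} (hf : ContDiff ℝ (⊤ : ℕ∞) f) :
    ContDiff ℝ (⊤ : ℕ∞) (fun x => fderiv ℝ (gradient f) x) :=
  (contDiff_gradient hf).fderiv_right (by simp)

lemma hasDerivAt_comp_gradient {f : Vec n → ℝ} (hf : ContDiff ℝ (⊤ : ℕ∞) f)
    {x : ℝ → Vec n} {x' : Vec n} {t : ℝ} (hx : HasDerivAt x x' t) :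
    HasDerivAt (fun s => gradient f (x s)) (fderiv ℝ (gradient f) (x t) x') t :=
  ((contDiff_gradient hf).differentiable (by simp) (x t)).hasFDerivAt.comp_hasDerivAt t hx

lemma hasDerivAt_comp_f {f : Vec n → ℝ} (hf : ContDiff ℝ (⊤ : ℕ∞) f)
    {x : ℝ → Vec n} {x' : Vec n} {t : ℝ} (hx : HasDerivAt x x' t) :
    HasDerivAt (fun s => f (x s)) ⟪gradient f (x t), x'⟫ t := by
  have hd : DifferentiableAt ℝ f (x t) := hf.differentiable (by simp) (x t)
  have hg := hd.hasGradientAt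
  exact hg.hasFDerivAt.comp_hasDerivAt t hx

end SVMAux
namespace SVMAux
attribute [local instance] Matrix.linftyOpNormedRing Matrix.linftyOpNormedAlgebra

variable {n : ℕ}

lemma hasDerivAt_freeEnergy {L : Matrix (Fin n) (Fin n) ℝ} (hL : L.IsHermitian)
    {f : Vec n → ℝ} (hf : ContDiff ℝ (⊤ : ℕ∞) f) {x : ℝ → Vec n} {x' : Vec n} {t : ℝ}
    (hx : HasDerivAt x x' t) :
    HasDerivAt (fun s => freeEnergy L f (x s)) ⟪mv L (x t) + gradient f (x t), x'⟫ t := by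
  have h1 : HasDerivAt (fun s => (⟪x s, mv L (x s)⟫ : ℝ))
      (⟪x t, mv L x'⟫ + ⟪x', mv L (x t)⟫) t := hx.inner ℝ (hasDerivAt_mv_const L hx)
  have h2 := (h1.const_mul (1/2 : ℝ)).add (hasDerivAt_comp_f hf hx)
  have e : (1/2 : ℝ) * (⟪x t, mv L x'⟫ + ⟪x', mv L (x t)⟫) + ⟪gradient f (x t), x'⟫
      = ⟪mv L (x t) + gradient f (x t), x'⟫ := by
    have e1 : ⟪x t, mv L x'⟫ = ⟪mv L (x t), x'⟫ := (inner_mv_left hL (x t) x').symm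
    have e2 : (⟪x', mv L (x t)⟫ : ℝ) = ⟪mv L (x t), x'⟫ := real_inner_comm _ _
    rw [e1, e2, inner_add_left]
    ring
  rw [← e]
  exact h2

lemma contDiffOn_freeEnergy {L : Matrix (Fin n) (Fin n) ℝ}
    {f : Vec n → ℝ} (hf : ContDiff ℝ (⊤ : ℕ∞) f) {x : ℝ → Vec n} {s : Set ℝ}
    (hx : ContDiffOn ℝ (⊤ : ℕ∞) x s) :
    ContDiffOn ℝ (⊤ : ℕ∞) (fun t => freeEnergy L f (x t)) s := by
  have h1 : ContDiffOn ℝ (⊤ : ℕ∞) (fun t => (⟪x t, mv L (x t)⟫ : ℝ)) s :=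
    hx.inner ℝ (contDiffOn_mv contDiffOn_const hx)
  exact (contDiffOn_const.mul h1).add (hf.comp_contDiffOn hx)

end SVMAux
namespace SVMAux
attribute [local instance] Matrix.linftyOpNormedRing Matrix.linftyOpNormedAlgebra

variable {n : ℕ} (M L : Matrix (Fin n) (Fin n) ℝ)

/-- `B(t) = I + (t/2) M L`. -/
def Bm (t : ℝ) : Matrix (Fin n) (Fin n) ℝ := 1 + (t / 2) • (M * L)

/-- The set of times where `B(t)` is invertible. -/
def UU : Set ℝ := {t | IsUnit (Bm M L t).det}

lemma contDiff_Bm : ContDiff ℝ (⊤ : ℕ∞) (Bm M L) := by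
  exact contDiff_const.add ((contDiff_id.div_const 2).smul contDiff_const)

lemma isOpen_UU : IsOpen (UU M L) := by
  have hc : Continuous fun t => (Bm M L t).det := (contDiff_Bm M L).continuous.matrix_det
  have : UU M L = (fun t => (Bm M L t).det) ⁻¹' {x | x ≠ 0} := by
    ext t; simp [UU, isUnit_iff_ne_zero]
  rw [this]
  exact isOpen_ne.preimage hc

lemma Bm_zero : Bm M L 0 = 1 := by simp [Bm]

lemma zero_mem_UU : (0 : ℝ) ∈ UU M L := by
  simp [UU, Bm_zero]

lemma svmInv_eq (t : ℝ) : svmInv M L t = (Bm M L t)⁻¹ := rfl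

lemma Am_mul_Bm {t : ℝ} (ht : t ∈ UU M L) : svmInv M L t * Bm M L t = 1 :=
  Matrix.nonsing_inv_mul _ ht

lemma Bm_mul_Am {t : ℝ} (ht : t ∈ UU M L) : Bm M L t * svmInv M L t = 1 :=
  Matrix.mul_nonsing_inv _ ht

lemma svmInv_zero : svmInv M L 0 = 1 := by
  rw [svmInv_eq, Bm_zero, inv_one]

lemma contDiffOn_Am : ContDiffOn ℝ (⊤ : ℕ∞) (svmInv M L) (UU M L) := by
  intro t ht
  have hu : IsUnit (Bm M L t) := (Matrix.isUnit_iff_isUnit_det _).2 ht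
  obtain ⟨u, hu⟩ := hu
  have h1 : ContDiffAt ℝ (⊤ : ℕ∞) Ring.inverse ((u : Matrix (Fin n) (Fin n) ℝ)) :=
    contDiffAt_ringInverse ℝ u
  rw [hu] at h1
  have h2 : ContDiffAt ℝ (⊤ : ℕ∞) (fun s => Ring.inverse (Bm M L s)) t :=
    h1.comp t (contDiff_Bm M L).contDiffAt
  have h3 : ContDiffAt ℝ (⊤ : ℕ∞) (svmInv M L) t := by
    apply h2.congr_of_eventuallyEq
    filter_upwards with s
    rw [svmInv_eq, Matrix.nonsing_inv_eq_ringInverse]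
  exact (h3.contDiffWithinAt)

/-- Derivative of `A = B⁻¹`. -/
def Am' (t : ℝ) : Matrix (Fin n) (Fin n) ℝ :=
  -((1/2 : ℝ) • (svmInv M L t * (M * L) * svmInv M L t))

lemma hasDerivAt_Bm (t : ℝ) : HasDerivAt (Bm M L) ((1/2 : ℝ) • (M * L)) t := by
  have h : HasDerivAt (fun s : ℝ => (s / 2) • (M * L)) ((1/2 : ℝ) • (M * L)) t := by
    have := ((hasDerivAt_id t).div_const 2).smul_const (M * L)
    simp at this ⊢; exact this
  have := (hasDerivAt_const t (1 : Matrix (Fin n) (Fin n) ℝ)).fun_add h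
  exact this.congr_deriv (zero_add _)

lemma hasDerivAt_Am {t : ℝ} (ht : t ∈ UU M L) :
    HasDerivAt (svmInv M L) (Am' M L t) t := by
  have hdiff : DifferentiableAt ℝ (svmInv M L) t :=
    ((contDiffOn_Am M L t ht).differentiableWithinAt (by simp)).differentiableAt
      ((isOpen_UU M L).mem_nhds ht)
  have hA := hdiff.hasDerivAt
  set d := deriv (svmInv M L) t with hd
  -- derivative of A * B is zero since A * B = 1 on a neighborhood
  have hprod : HasDerivAt (fun s => svmInv M L s * Bm M L s)
      (d * Bm M L t + svmInv M L t * ((1/2 : ℝ) • (M * L))) t :=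
    hA.mul (hasDerivAt_Bm M L t)
  have hone : (fun s => svmInv M L s * Bm M L s) =ᶠ[nhds t] (fun _ => 1) := by
    filter_upwards [(isOpen_UU M L).mem_nhds ht] with s hs
    exact Am_mul_Bm M L hs
  have hzero : HasDerivAt (fun s => svmInv M L s * Bm M L s) 0 t := by
    have : HasDerivAt (fun _ : ℝ => (1 : Matrix (Fin n) (Fin n) ℝ)) 0 t := hasDerivAt_const _ _
    exact this.congr_of_eventuallyEq hone
  have heq : d * Bm M L t + svmInv M L t * ((1/2 : ℝ) • (M * L)) = 0 :=
    hprod.unique hzero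
  have hd2 : d * Bm M L t = -((1/2 : ℝ) • (svmInv M L t * (M * L))) := by
    rw [eq_neg_of_add_eq_zero_left heq, mul_smul_comm]
  have : d = Am' M L t := by
    have h3 := congrArg (fun X => X * svmInv M L t) hd2
    rw [Matrix.mul_assoc, Bm_mul_Am M L ht, Matrix.mul_one] at h3
    rw [h3, Am']
    rw [neg_mul, smul_mul_assoc]
  rw [← this]
  exact hA

lemma contDiffOn_Am' : ContDiffOn ℝ (⊤ : ℕ∞) (Am' M L) (UU M L) := by
  have h := contDiffOn_Am M L
  exact ((h.mul contDiffOn_const).mul h).const_smul (1/2 : ℝ) |>.neg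

lemma Am'_zero : Am' M L 0 = -((1/2 : ℝ) • (M * L)) := by
  simp [Am', svmInv_zero]

end SVMAux
namespace SVMAux
attribute [local instance] Matrix.linftyOpNormedRing Matrix.linftyOpNormedAlgebra

variable {n : ℕ} (M L : Matrix (Fin n) (Fin n) ℝ) (f : Vec n → ℝ) (φ : ℝ → Vec n) (tn : ℝ)

def cb (t : ℝ) : Vec n := phiBar (φ (tn - t)) (φ tn)
def cb' (t : ℝ) : Vec n := (1/2 : ℝ) • deriv φ (tn - t)
def w (t : ℝ) : Vec n := φ tn - (t / 2) • mv M (gradient f (cb φ tn t))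
def w' (t : ℝ) : Vec n :=
  -((1/2 : ℝ) • mv M (gradient f (cb φ tn t)))
    - (t / 2) • mv M (fderiv ℝ (gradient f) (cb φ tn t) (cb' φ tn t))
def pt (t : ℝ) : Vec n := phiTilde M L f (φ (tn - t)) (φ tn) t
def pt' (t : ℝ) : Vec n := mv (Am' M L t) (w M f φ tn t) + mv (svmInv M L t) (w' M f φ tn t)
def mt (t : ℝ) : Vec n := muTilde M L f (φ (tn - t)) (φ tn) t
def mt' (t : ℝ) : Vec n :=
  mv L (pt' M L f φ tn t) + fderiv ℝ (gradient f) (pt M L f φ tn t) (pt' M L f φ tn t)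
def bb (t : ℝ) : Vec n :=
  mv (1 - (t / 2) • (M * L)) (φ tn) - t • mv M (gradient f (pt M L f φ tn t))
def bb' (t : ℝ) : Vec n :=
  -((1/2 : ℝ) • mv (M * L) (φ tn)) - mv M (gradient f (pt M L f φ tn t))
    - t • mv M (fderiv ℝ (gradient f) (pt M L f φ tn t) (pt' M L f φ tn t))
def ph (t : ℝ) : Vec n := phiHat M L f (φ (tn - t)) (φ tn) t
def ph' (t : ℝ) : Vec n := mv (Am' M L t) (bb M L f φ tn t) + mv (svmInv M L t) (bb' M L f φ tn t)
def hh (t : ℝ) : ℝ :=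
  freeEnergy L f (ph M L f φ tn t) - Ftilde M L f (φ (tn - t)) (φ tn) t
def hh' (t : ℝ) : ℝ :=
  ⟪mv L (ph M L f φ tn t) + gradient f (ph M L f φ tn t), ph' M L f φ tn t⟫
    + ⟪mt M L f φ tn t, mv M (mt M L f φ tn t)⟫
    + t * (⟪mt' M L f φ tn t, mv M (mt M L f φ tn t)⟫
        + ⟪mt M L f φ tn t, mv M (mt' M L f φ tn t)⟫)

lemma pt_eq (t : ℝ) : pt M L f φ tn t = mv (svmInv M L t) (w M f φ tn t) := rfl
lemma ph_eq (t : ℝ) : ph M L f φ tn t = mv (svmInv M L t) (bb M L f φ tn t) := rfl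
lemma mt_eq (t : ℝ) :
    mt M L f φ tn t = mv L (pt M L f φ tn t) + gradient f (pt M L f φ tn t) := rfl

variable {f φ}

section Derivs
variable (hf : ContDiff ℝ (⊤ : ℕ∞) f) (hφ : ContDiff ℝ (⊤ : ℕ∞) φ)
include hf hφ

omit hf in
lemma hasDerivAt_cb (t : ℝ) : HasDerivAt (cb φ tn) (cb' φ tn t) t := by
  have h1 : HasDerivAt (fun s : ℝ => tn - s) (-1 : ℝ) t := by
    have := (hasDerivAt_const t tn).sub (hasDerivAt_id t)
    simp at this; exact this
  have h2 : HasDerivAt (fun s : ℝ => φ (tn - s)) ((-1 : ℝ) • deriv φ (tn - t)) t :=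
    (hφ.differentiable (by simp) (tn - t)).hasDerivAt.scomp t h1
  have h3 : HasDerivAt (fun s : ℝ => phiBar (φ (tn - s)) (φ tn))
      ((1/2 : ℝ) • ((0 : Vec n) - (-1 : ℝ) • deriv φ (tn - t))) t := by
    exact (((hasDerivAt_const t ((3:ℝ) • φ tn)).sub h2).const_smul (1/2 : ℝ))
  have : (1/2 : ℝ) • ((0 : Vec n) - (-1 : ℝ) • deriv φ (tn - t)) = cb' φ tn t := by
    simp [cb']
  rw [this] at h3
  exact h3

omit hf hφ in
lemma contDiff_derivphi (hφ : ContDiff ℝ (⊤ : ℕ∞) φ) : ContDiff ℝ (⊤ : ℕ∞) (deriv φ) := by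
  have h1 : ContDiff ℝ (⊤ : ℕ∞) (fun x => fderiv ℝ φ x) := hφ.fderiv_right (by simp)
  have h2 : ContDiff ℝ (⊤ : ℕ∞) (fun x => fderiv ℝ φ x 1) := h1.clm_apply contDiff_const
  have : (fun x => fderiv ℝ φ x 1) = deriv φ := by
    funext x; exact fderiv_apply_one_eq_deriv
  rwa [this] at h2

omit hf in
lemma contDiff_cb : ContDiff ℝ (⊤ : ℕ∞) (cb φ tn) := by
  have : ContDiff ℝ (⊤ : ℕ∞) (fun s : ℝ => φ (tn - s)) :=
    hφ.comp (contDiff_const.sub contDiff_id)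
  exact ((contDiff_const.sub this).const_smul (1/2 : ℝ))

omit hf in
lemma contDiff_cb' : ContDiff ℝ (⊤ : ℕ∞) (cb' φ tn) := by
  have : ContDiff ℝ (⊤ : ℕ∞) (fun s : ℝ => deriv φ (tn - s)) :=
    (contDiff_derivphi hφ).comp (contDiff_const.sub contDiff_id)
  exact this.const_smul (1/2 : ℝ)

lemma hasDerivAt_w (t : ℝ) : HasDerivAt (w M f φ tn) (w' M f φ tn t) t := by
  have hy : HasDerivAt (fun s => mv M (gradient f (cb φ tn s)))
      (mv M (fderiv ℝ (gradient f) (cb φ tn t) (cb' φ tn t))) t :=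
    hasDerivAt_mv_const M (hasDerivAt_comp_gradient hf (hasDerivAt_cb tn hφ t))
  have h2 : HasDerivAt (fun s : ℝ => (s / 2) • mv M (gradient f (cb φ tn s)))
      ((t / 2) • mv M (fderiv ℝ (gradient f) (cb φ tn t) (cb' φ tn t))
        + (1/2 : ℝ) • mv M (gradient f (cb φ tn t))) t := by
    have := ((hasDerivAt_id t).div_const 2).fun_smul hy
    simp at this ⊢; exact this
  have h3 := (hasDerivAt_const t (φ tn)).sub h2
  have : (0 : Vec n) - ((t / 2) • mv M (fderiv ℝ (gradient f) (cb φ tn t) (cb' φ tn t))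
        + (1/2 : ℝ) • mv M (gradient f (cb φ tn t))) = w' M f φ tn t := by
    rw [w']; abel
  rw [this] at h3
  exact h3

lemma hasDerivAt_pt {t : ℝ} (ht : t ∈ UU M L) :
    HasDerivAt (pt M L f φ tn) (pt' M L f φ tn t) t := by
  have := hasDerivAt_mv (hasDerivAt_Am M L ht) (hasDerivAt_w M tn hf hφ t)
  exact this

lemma hasDerivAt_mt {t : ℝ} (ht : t ∈ UU M L) :
    HasDerivAt (mt M L f φ tn) (mt' M L f φ tn t) t := by
  have hpt := hasDerivAt_pt M L tn hf hφ ht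
  exact (hasDerivAt_mv_const L hpt).add (hasDerivAt_comp_gradient hf hpt)

lemma hasDerivAt_bb {t : ℝ} (ht : t ∈ UU M L) :
    HasDerivAt (bb M L f φ tn) (bb' M L f φ tn t) t := by
  have hpt := hasDerivAt_pt M L tn hf hφ ht
  have h1 : HasDerivAt (fun s : ℝ => mv (1 - (s / 2) • (M * L)) (φ tn))
      (mv (-((1/2 : ℝ) • (M * L))) (φ tn)) t := by
    have hm : HasDerivAt (fun s : ℝ => 1 - (s / 2) • (M * L)) (-((1/2 : ℝ) • (M * L))) t := by
      have := ((hasDerivAt_id t).div_const 2).smul_const (M * L)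
      have := (hasDerivAt_const t (1 : Matrix (Fin n) (Fin n) ℝ)).fun_sub this
      simp at this ⊢; exact this
    simpa [mv_zero] using hasDerivAt_mv hm (hasDerivAt_const t (φ tn))
  have hz : HasDerivAt (fun s => mv M (gradient f (pt M L f φ tn s)))
      (mv M (fderiv ℝ (gradient f) (pt M L f φ tn t) (pt' M L f φ tn t))) t :=
    hasDerivAt_mv_const M (hasDerivAt_comp_gradient hf hpt)
  have h2 : HasDerivAt (fun s : ℝ => s • mv M (gradient f (pt M L f φ tn s)))
      (t • mv M (fderiv ℝ (gradient f) (pt M L f φ tn t) (pt' M L f φ tn t))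
        + mv M (gradient f (pt M L f φ tn t))) t := by
    have := (hasDerivAt_id t).fun_smul hz
    simp at this ⊢; exact this
  have h3 := h1.sub h2
  have : mv (-((1/2 : ℝ) • (M * L))) (φ tn)
      - (t • mv M (fderiv ℝ (gradient f) (pt M L f φ tn t) (pt' M L f φ tn t))
        + mv M (gradient f (pt M L f φ tn t))) = bb' M L f φ tn t := by
    rw [bb', mv_neg_mat, mv_smul_mat]; abel
  rw [this] at h3
  exact h3

lemma hasDerivAt_ph {t : ℝ} (ht : t ∈ UU M L) :
    HasDerivAt (ph M L f φ tn) (ph' M L f φ tn t) t :=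
  hasDerivAt_mv (hasDerivAt_Am M L ht) (hasDerivAt_bb M L tn hf hφ ht)

lemma hasDerivAt_hh (hL : L.IsHermitian) {t : ℝ} (ht : t ∈ UU M L) :
    HasDerivAt (hh M L f φ tn) (hh' M L f φ tn t) t := by
  have hmt := hasDerivAt_mt M L tn hf hφ ht
  have hP2 : HasDerivAt (fun s => (⟪mt M L f φ tn s, mv M (mt M L f φ tn s)⟫ : ℝ))
      (⟪mt M L f φ tn t, mv M (mt' M L f φ tn t)⟫
        + ⟪mt' M L f φ tn t, mv M (mt M L f φ tn t)⟫) t :=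
    hmt.inner ℝ (hasDerivAt_mv_const M hmt)
  have hF : HasDerivAt (fun s => freeEnergy L f (ph M L f φ tn s))
      ⟪mv L (ph M L f φ tn t) + gradient f (ph M L f φ tn t), ph' M L f φ tn t⟫ t :=
    hasDerivAt_freeEnergy hL hf (hasDerivAt_ph M L tn hf hφ ht)
  have h3 : HasDerivAt (fun s : ℝ => s * (⟪mt M L f φ tn s, mv M (mt M L f φ tn s)⟫ : ℝ))
      (t * (⟪mt M L f φ tn t, mv M (mt' M L f φ tn t)⟫
        + ⟪mt' M L f φ tn t, mv M (mt M L f φ tn t)⟫)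
        + ⟪mt M L f φ tn t, mv M (mt M L f φ tn t)⟫) t := by
    have h := (hasDerivAt_id t).fun_mul hP2
    refine h.congr_deriv (Eq.symm ?_)
    simp only [id_eq]
    ring
  have h4 := (hF.fun_sub (hasDerivAt_const t (freeEnergy L f (φ tn)))).fun_add h3
  have heq : (fun s => freeEnergy L f (ph M L f φ tn s) - freeEnergy L f (φ tn)
      + s * (⟪mt M L f φ tn s, mv M (mt M L f φ tn s)⟫ : ℝ)) = hh M L f φ tn := by
    funext s
    rw [hh, Ftilde]
    show _ = freeEnergy L f (ph M L f φ tn s)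
      - (freeEnergy L f (φ tn) - s * (⟪mt M L f φ tn s, mv M (mt M L f φ tn s)⟫ : ℝ))
    ring
  rw [heq] at h4
  have : ⟪mv L (ph M L f φ tn t) + gradient f (ph M L f φ tn t), ph' M L f φ tn t⟫ - 0
      + (t * (⟪mt M L f φ tn t, mv M (mt' M L f φ tn t)⟫
        + ⟪mt' M L f φ tn t, mv M (mt M L f φ tn t)⟫)
        + ⟪mt M L f φ tn t, mv M (mt M L f φ tn t)⟫) = hh' M L f φ tn t := by
    rw [hh']; ring
  rw [this] at h4
  exact h4

end Derivs
end SVMAux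
namespace SVMAux
attribute [local instance] Matrix.linftyOpNormedRing Matrix.linftyOpNormedAlgebra

variable {n : ℕ} (M L : Matrix (Fin n) (Fin n) ℝ) (f : Vec n → ℝ) (φ : ℝ → Vec n) (tn : ℝ)

lemma cb_zero : cb φ tn 0 = φ tn := by
  show (1/2 : ℝ) • ((3 : ℝ) • φ tn - φ (tn - 0)) = φ tn
  rw [sub_zero]
  module

lemma w_zero : w M f φ tn 0 = φ tn := by
  simp [w]

lemma pt_zero : pt M L f φ tn 0 = φ tn := by
  rw [pt_eq, svmInv_zero, w_zero, mv_one]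

lemma mt_zero : mt M L f φ tn 0 = mv L (φ tn) + gradient f (φ tn) := by
  rw [mt_eq, pt_zero]

lemma bb_zero : bb M L f φ tn 0 = φ tn := by
  show mv (1 - ((0:ℝ) / 2) • (M * L)) (φ tn) - (0:ℝ) • _ = φ tn
  simp [mv_one]

lemma ph_zero : ph M L f φ tn 0 = φ tn := by
  rw [ph_eq, svmInv_zero, bb_zero, mv_one]

lemma w'_zero : w' M f φ tn 0 = -((1/2 : ℝ) • mv M (gradient f (φ tn))) := by
  rw [w', cb_zero]
  simp

lemma pt'_zero :
    pt' M L f φ tn 0 = -((1/2 : ℝ) • mv M (mv L (φ tn) + gradient f (φ tn))) := by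
  rw [pt', Am'_zero, w_zero, w'_zero, svmInv_zero, mv_one, mv_neg_mat, mv_smul_mat, mv_mul,
    mv_add]
  module

lemma bb'_zero :
    bb' M L f φ tn 0 = -((1/2 : ℝ) • mv (M * L) (φ tn)) - mv M (gradient f (φ tn)) := by
  rw [bb', pt_zero]
  simp

lemma ph'_zero :
    ph' M L f φ tn 0 = -(mv M (mv L (φ tn) + gradient f (φ tn))) := by
  rw [ph', Am'_zero, bb_zero, bb'_zero, svmInv_zero, mv_one, mv_neg_mat, mv_smul_mat, mv_mul,
    mv_add]
  module

lemma mt'_zero :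
    mt' M L f φ tn 0 = -((1/2 : ℝ) • (mv L (mv M (mv L (φ tn) + gradient f (φ tn)))
      + fderiv ℝ (gradient f) (φ tn) (mv M (mv L (φ tn) + gradient f (φ tn))))) := by
  rw [mt', pt'_zero, pt_zero, mv_neg, mv_smul, ContinuousLinearMap.map_neg, ContinuousLinearMap.map_smul]
  module

lemma hh_zero : hh M L f φ tn 0 = 0 := by
  rw [hh, Ftilde, ph_zero]
  show freeEnergy L f (φ tn) - (freeEnergy L f (φ tn) - 0 * _) = 0
  ring

lemma hh'_zero : hh' M L f φ tn 0 = 0 := by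
  rw [hh', ph_zero, ph'_zero, mt_zero]
  simp [inner_neg_right]

/-! Smoothness -/

variable {f φ}

section Smooth
variable (hf : ContDiff ℝ (⊤ : ℕ∞) f) (hφ : ContDiff ℝ (⊤ : ℕ∞) φ)
include hf hφ

lemma contDiff_w : ContDiff ℝ (⊤ : ℕ∞) (w M f φ tn) := by
  have hy : ContDiff ℝ (⊤ : ℕ∞) (fun t => mv M (gradient f (cb φ tn t))) :=
    (TL n M).contDiff.comp ((contDiff_gradient hf).comp (contDiff_cb tn hφ))
  exact contDiff_const.sub ((contDiff_id.div_const 2).smul hy)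

lemma contDiff_w' : ContDiff ℝ (⊤ : ℕ∞) (w' M f φ tn) := by
  have hy : ContDiff ℝ (⊤ : ℕ∞) (fun t => mv M (gradient f (cb φ tn t))) :=
    (TL n M).contDiff.comp ((contDiff_gradient hf).comp (contDiff_cb tn hφ))
  have hz : ContDiff ℝ (⊤ : ℕ∞) (fun t => mv M (fderiv ℝ (gradient f) (cb φ tn t) (cb' φ tn t))) :=
    (TL n M).contDiff.comp
      (((contDiff_gradient_fderiv hf).comp (contDiff_cb tn hφ)).clm_apply (contDiff_cb' tn hφ))
  exact (hy.const_smul (1/2 : ℝ)).neg.sub ((contDiff_id.div_const 2).smul hz)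

lemma contDiffOn_pt : ContDiffOn ℝ (⊤ : ℕ∞) (pt M L f φ tn) (UU M L) := by
  have : ContDiffOn ℝ (⊤ : ℕ∞) (fun t => mv (svmInv M L t) (w M f φ tn t)) (UU M L) :=
    contDiffOn_mv (contDiffOn_Am M L) (contDiff_w M tn hf hφ).contDiffOn
  exact this

lemma contDiffOn_pt' : ContDiffOn ℝ (⊤ : ℕ∞) (pt' M L f φ tn) (UU M L) :=
  (contDiffOn_mv (contDiffOn_Am' M L) (contDiff_w M tn hf hφ).contDiffOn).add
    (contDiffOn_mv (contDiffOn_Am M L) (contDiff_w' M tn hf hφ).contDiffOn)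

lemma contDiffOn_mt : ContDiffOn ℝ (⊤ : ℕ∞) (mt M L f φ tn) (UU M L) :=
  (contDiffOn_mv contDiffOn_const (contDiffOn_pt M L tn hf hφ)).add
    ((contDiff_gradient hf).comp_contDiffOn (contDiffOn_pt M L tn hf hφ))

lemma contDiffOn_X : ContDiffOn ℝ (⊤ : ℕ∞)
    (fun t => mv M (fderiv ℝ (gradient f) (pt M L f φ tn t) (pt' M L f φ tn t))) (UU M L) :=
  contDiffOn_mv contDiffOn_const
    (((contDiff_gradient_fderiv hf).comp_contDiffOn (contDiffOn_pt M L tn hf hφ)).clm_apply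
      (contDiffOn_pt' M L tn hf hφ))

lemma contDiffOn_mt' : ContDiffOn ℝ (⊤ : ℕ∞) (mt' M L f φ tn) (UU M L) :=
  (contDiffOn_mv contDiffOn_const (contDiffOn_pt' M L tn hf hφ)).add
    (((contDiff_gradient_fderiv hf).comp_contDiffOn (contDiffOn_pt M L tn hf hφ)).clm_apply
      (contDiffOn_pt' M L tn hf hφ))

lemma contDiffOn_bb : ContDiffOn ℝ (⊤ : ℕ∞) (bb M L f φ tn) (UU M L) := by
  have h1 : ContDiff ℝ (⊤ : ℕ∞) (fun t : ℝ => mv (1 - (t / 2) • (M * L)) (φ tn)) := by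
    have hm : ContDiff ℝ (⊤ : ℕ∞) (fun t : ℝ => 1 - (t / 2) • (M * L)) :=
      contDiff_const.sub ((contDiff_id.div_const 2).smul contDiff_const)
    exact ((TL n).contDiff.comp hm).clm_apply contDiff_const
  have h2 : ContDiffOn ℝ (⊤ : ℕ∞) (fun t => mv M (gradient f (pt M L f φ tn t))) (UU M L) :=
    contDiffOn_mv contDiffOn_const
      ((contDiff_gradient hf).comp_contDiffOn (contDiffOn_pt M L tn hf hφ))
  exact h1.contDiffOn.sub (contDiffOn_id.smul h2)

lemma contDiffOn_ph : ContDiffOn ℝ (⊤ : ℕ∞) (ph M L f φ tn) (UU M L) := by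
  have : ContDiffOn ℝ (⊤ : ℕ∞) (fun t => mv (svmInv M L t) (bb M L f φ tn t)) (UU M L) :=
    contDiffOn_mv (contDiffOn_Am M L) (contDiffOn_bb M L tn hf hφ)
  exact this

omit hf hφ in
lemma hh_eq : hh M L f φ tn = fun t => freeEnergy L f (ph M L f φ tn t)
    - freeEnergy L f (φ tn) + t * (⟪mt M L f φ tn t, mv M (mt M L f φ tn t)⟫ : ℝ) := by
  funext s
  rw [hh, Ftilde]
  show freeEnergy L f (ph M L f φ tn s)
      - (freeEnergy L f (φ tn) - s * (⟪mt M L f φ tn s, mv M (mt M L f φ tn s)⟫ : ℝ)) = _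
  ring

lemma contDiffOn_hh : ContDiffOn ℝ (⊤ : ℕ∞) (hh M L f φ tn) (UU M L) := by
  rw [hh_eq]
  have h1 := contDiffOn_freeEnergy (L := L) hf (contDiffOn_ph M L tn hf hφ)
  have h2 : ContDiffOn ℝ (⊤ : ℕ∞)
      (fun t => (⟪mt M L f φ tn t, mv M (mt M L f φ tn t)⟫ : ℝ)) (UU M L) :=
    ContDiffOn.inner ℝ (contDiffOn_mt M L tn hf hφ)
      (contDiffOn_mv contDiffOn_const (contDiffOn_mt M L tn hf hφ))
  exact (h1.sub contDiffOn_const).add (contDiffOn_id.mul h2)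

end Smooth
end SVMAux
namespace SVMAux
attribute [local instance] Matrix.linftyOpNormedRing Matrix.linftyOpNormedAlgebra

variable {n : ℕ} (M L : Matrix (Fin n) (Fin n) ℝ) {f : Vec n → ℝ} {φ : ℝ → Vec n} (tn : ℝ)

lemma hasDerivAt_hh'_zero (hM : M.IsHermitian) (hL : L.IsHermitian)
    (hf : ContDiff ℝ (⊤ : ℕ∞) f) (hφ : ContDiff ℝ (⊤ : ℕ∞) φ) :
    HasDerivAt (hh' M L f φ tn) 0 0 := by
  have h0 : (0:ℝ) ∈ UU M L := zero_mem_UU M L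
  have hnhds : UU M L ∈ nhds (0:ℝ) := (isOpen_UU M L).mem_nhds h0
  set φn := φ tn with hφn
  set μ : Vec n := mv L φn + gradient f φn with hμdef
  set m : Vec n := mv M μ with hmdef
  set Hm : Vec n := mv L m + fderiv ℝ (gradient f) φn m with hHmdef
  have hA := hasDerivAt_Am M L h0
  -- derivative of Am' at 0
  have hAm' : HasDerivAt (Am' M L) ((1/2 : ℝ) • ((M*L) * (M*L))) 0 := by
    have h := (((hA.fun_mul (hasDerivAt_const 0 (M*L))).fun_mul hA).fun_const_smul (1/2:ℝ)).fun_neg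
    have hfun : (fun t => -((1/2:ℝ) • (svmInv M L t * (M*L) * svmInv M L t))) = Am' M L := rfl
    rw [hfun] at h
    refine h.congr_deriv (Eq.symm ?_)
    rw [svmInv_zero, Am'_zero]
    simp only [Matrix.mul_one, Matrix.one_mul, Matrix.mul_zero, mul_zero, add_zero, neg_smul,
      smul_mul_assoc, mul_smul_comm, neg_mul, mul_neg, smul_neg, neg_neg, smul_smul]
    module
  have hpt0 := hasDerivAt_pt M L tn hf hφ h0
  -- derivative of bb' at 0
  have hXd : DifferentiableAt ℝ
      (fun t => mv M (fderiv ℝ (gradient f) (pt M L f φ tn t) (pt' M L f φ tn t))) 0 :=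
    (((contDiffOn_X M L tn hf hφ).differentiableOn (by simp)).differentiableAt hnhds)
  have hbb' : HasDerivAt (bb' M L f φ tn)
      (-(mv M (fderiv ℝ (gradient f) φn (pt' M L f φ tn 0)))
        - mv M (fderiv ℝ (gradient f) φn (pt' M L f φ tn 0))) 0 := by
    have h1 : HasDerivAt (fun t => mv M (gradient f (pt M L f φ tn t)))
        (mv M (fderiv ℝ (gradient f) (pt M L f φ tn 0) (pt' M L f φ tn 0))) 0 :=
      hasDerivAt_mv_const M (hasDerivAt_comp_gradient hf hpt0)
    have h2 : HasDerivAt (fun t : ℝ =>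
        t • mv M (fderiv ℝ (gradient f) (pt M L f φ tn t) (pt' M L f φ tn t)))
        (mv M (fderiv ℝ (gradient f) (pt M L f φ tn 0) (pt' M L f φ tn 0))) 0 := by
      have h := (hasDerivAt_id (0:ℝ)).fun_smul hXd.hasDerivAt
      refine h.congr_deriv (Eq.symm ?_)
      simp
    have h3 := ((hasDerivAt_const (0:ℝ)
        (-((1/2 : ℝ) • mv (M * L) (φ tn)))).fun_sub h1).fun_sub h2
    have hfun : (fun t => -((1/2 : ℝ) • mv (M * L) (φ tn))
        - mv M (gradient f (pt M L f φ tn t))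
        - t • mv M (fderiv ℝ (gradient f) (pt M L f φ tn t) (pt' M L f φ tn t)))
        = bb' M L f φ tn := rfl
    rw [hfun] at h3
    rw [pt_zero] at h3
    refine h3.congr_deriv (Eq.symm ?_)
    rw [← hφn]
    abel
  -- derivative of ph' at 0
  have hbb0 := hasDerivAt_bb M L tn hf hφ h0
  have hph' : HasDerivAt (ph' M L f φ tn) (mv M Hm) 0 := by
    have hq := (hasDerivAt_mv hAm' hbb0).fun_add (hasDerivAt_mv hA hbb')
    have hfun : (fun t => mv (Am' M L t) (bb M L f φ tn t)
        + mv (svmInv M L t) (bb' M L f φ tn t)) = ph' M L f φ tn := rfl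
    rw [hfun] at hq
    refine hq.congr_deriv (Eq.symm ?_)
    rw [hHmdef, hmdef, hμdef, hφn, svmInv_zero, Am'_zero, bb_zero, bb'_zero, pt'_zero, mv_one]
    simp only [mv_neg_mat, mv_smul_mat, mv_mul, mv_add, mv_sub, mv_neg, mv_smul,
      ContinuousLinearMap.map_add, ContinuousLinearMap.map_smul, ContinuousLinearMap.map_neg,
      smul_neg, neg_neg, smul_add, neg_add, neg_sub, smul_sub, smul_smul]
    module
  -- assemble
  have hph := hasDerivAt_ph M L tn hf hφ h0
  have hmt0 := hasDerivAt_mt M L tn hf hφ h0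
  have hMu : HasDerivAt (fun t => mv L (ph M L f φ tn t) + gradient f (ph M L f φ tn t))
      (mv L (ph' M L f φ tn 0) + fderiv ℝ (gradient f) (ph M L f φ tn 0) (ph' M L f φ tn 0))
      0 := (hasDerivAt_mv_const L hph).add (hasDerivAt_comp_gradient hf hph)
  have hp1 := hMu.inner ℝ hph'
  have hp2 := hmt0.inner ℝ (hasDerivAt_mv_const M hmt0)
  -- the factor multiplying t is differentiable at 0
  have dmt' : DifferentiableAt ℝ (mt' M L f φ tn) 0 :=
    ((contDiffOn_mt' M L tn hf hφ).differentiableOn (by simp)).differentiableAt hnhds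
  have dmt : DifferentiableAt ℝ (mt M L f φ tn) 0 :=
    ((contDiffOn_mt M L tn hf hφ).differentiableOn (by simp)).differentiableAt hnhds
  have dMmt : DifferentiableAt ℝ (fun t => mv M (mt M L f φ tn t)) 0 :=
    ((TL n M).differentiable.differentiableAt).comp 0 dmt
  have dMmt' : DifferentiableAt ℝ (fun t => mv M (mt' M L f φ tn t)) 0 :=
    ((TL n M).differentiable.differentiableAt).comp 0 dmt'
  have hSd : DifferentiableAt ℝ (fun t => (⟪mt' M L f φ tn t, mv M (mt M L f φ tn t)⟫
      + ⟪mt M L f φ tn t, mv M (mt' M L f φ tn t)⟫ : ℝ)) 0 :=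
    (dmt'.inner ℝ dMmt).add (dmt.inner ℝ dMmt')
  have hp3 : HasDerivAt (fun t : ℝ => t * (⟪mt' M L f φ tn t, mv M (mt M L f φ tn t)⟫
      + ⟪mt M L f φ tn t, mv M (mt' M L f φ tn t)⟫ : ℝ))
      ((⟪mt' M L f φ tn 0, mv M (mt M L f φ tn 0)⟫
      + ⟪mt M L f φ tn 0, mv M (mt' M L f φ tn 0)⟫ : ℝ)) 0 := by
    have h := (hasDerivAt_id (0:ℝ)).fun_mul hSd.hasDerivAt
    refine h.congr_deriv (Eq.symm ?_)
    simp
  have htot := (hp1.fun_add hp2).fun_add hp3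
  have hfun : (fun t => (⟪(fun t => mv L (ph M L f φ tn t) + gradient f (ph M L f φ tn t)) t,
      ph' M L f φ tn t⟫ : ℝ)
      + ⟪mt M L f φ tn t, mv M (mt M L f φ tn t)⟫
      + t * (⟪mt' M L f φ tn t, mv M (mt M L f φ tn t)⟫
        + ⟪mt M L f φ tn t, mv M (mt' M L f φ tn t)⟫)) = hh' M L f φ tn := rfl
  rw [hfun] at htot
  refine htot.congr_deriv (Eq.symm ?_)
  rw [ph_zero, ph'_zero, mt_zero, mt'_zero, hHmdef, hmdef, hμdef, hφn]
  set P := mv L (φ tn) + gradient f (φ tn) with hP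
  set a := mv M P with ha
  have e1 : (⟪P, mv M (mv L a)⟫ : ℝ) = ⟪mv L a, a⟫ := by
    rw [← inner_mv_left hM]; exact real_inner_comm _ _
  have e2 : (⟪P, mv M (fderiv ℝ (gradient f) (φ tn) a)⟫ : ℝ)
      = ⟪fderiv ℝ (gradient f) (φ tn) a, a⟫ := by
    rw [← inner_mv_left hM]; exact real_inner_comm _ _
  simp only [mv_neg, mv_smul, mv_add, ContinuousLinearMap.map_neg, ContinuousLinearMap.map_smul,
    inner_neg_left, inner_neg_right, inner_add_left, inner_add_right, real_inner_smul_left,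
    real_inner_smul_right, smul_neg, neg_neg, inner_neg_neg]
  rw [e1, e2]
  ring

end SVMAux

/-- along an exact smooth solution, with `φⁿ⁻¹ = φ(tₙ − Δt)`, `φⁿ = φ(tₙ)`,
`u(Δt, 0) = F(φ̂(Δt)) − F̃(Δt) = O(Δt³)`. -/

theorem svm_u_at_beta_zero_third_order {n : ℕ}
    (M L : Matrix (Fin n) (Fin n) ℝ) (hM : M.PosSemidef) (hL : L.PosDef)
    (f : Vec n → ℝ) (hf : ContDiff ℝ (⊤ : ℕ∞) f)
    (g : Vec n → Vec n) (hg : ContDiff ℝ (⊤ : ℕ∞) g)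
    (φ : ℝ → Vec n) (hφ : ContDiff ℝ (⊤ : ℕ∞) φ)
    (hflow : ∀ t : ℝ, HasDerivAt φ (-(mv M (mv L (φ t) + gradient f (φ t)))) t)
    (tn : ℝ) :
    ∃ C > (0 : ℝ), ∃ Δt₀ > (0 : ℝ), ∀ Δt ∈ Set.Ioc (0 : ℝ) Δt₀,
      uFun M L f g (φ (tn - Δt)) (φ tn) Δt 0
        = freeEnergy L f (phiHat M L f (φ (tn - Δt)) (φ tn) Δt)
          - Ftilde M L f (φ (tn - Δt)) (φ tn) Δt ∧
      |uFun M L f g (φ (tn - Δt)) (φ tn) Δt 0| ≤ C * Δt ^ 3 := by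
  classical
  have h0 : (0:ℝ) ∈ SVMAux.UU M L := SVMAux.zero_mem_UU M L
  obtain ⟨ε, hε, hball⟩ := Metric.isOpen_iff.1 (SVMAux.isOpen_UU M L) 0 h0
  set b : ℝ := ε/2 with hbdef
  have hbpos : 0 < b := by positivity
  set s : Set ℝ := Set.Icc (0:ℝ) b with hsdef
  have hsub : s ⊆ SVMAux.UU M L := by
    intro x hx
    apply hball
    rw [Metric.mem_ball, Real.dist_eq, sub_zero]
    have h1 : |x| ≤ b := abs_le.2 ⟨by linarith [hx.1], hx.2⟩
    linarith
  have hudiff : UniqueDiffOn ℝ s := uniqueDiffOn_Icc hbpos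
  have h0s : (0:ℝ) ∈ s := ⟨le_refl 0, le_of_lt hbpos⟩
  set hh := SVMAux.hh M L f φ tn with hhdef
  have hhsm : ContDiffOn ℝ (⊤ : ℕ∞) hh (SVMAux.UU M L) := SVMAux.contDiffOn_hh M L tn hf hφ
  have hs3 : ContDiffOn ℝ ((2:ℕ) + 1) hh s := (hhsm.mono hsub).of_le (WithTop.coe_le_coe.2 le_top)
  have hcont : ContinuousOn (iteratedDerivWithin 3 hh s) s :=
    hs3.continuousOn_iteratedDerivWithin (le_refl _) hudiff
  obtain ⟨C₀, hC₀⟩ := isCompact_Icc.exists_bound_of_continuousOn hcont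
  have hd1 : ∀ t ∈ SVMAux.UU M L, HasDerivAt hh (SVMAux.hh' M L f φ tn t) t := fun t ht =>
    SVMAux.hasDerivAt_hh M L tn hf hφ hL.1 ht
  have it0 : iteratedDerivWithin 0 hh s 0 = 0 := by
    rw [iteratedDerivWithin_zero]; exact SVMAux.hh_zero M L f φ tn
  have hEq : Set.EqOn (iteratedDerivWithin 1 hh s) (SVMAux.hh' M L f φ tn) s := by
    intro y hy
    rw [iteratedDerivWithin_one]
    exact ((hd1 y (hsub hy)).hasDerivWithinAt).derivWithin (hudiff y hy)
  have it1 : iteratedDerivWithin 1 hh s 0 = 0 := by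
    rw [hEq h0s]; exact SVMAux.hh'_zero M L f φ tn
  have it2 : iteratedDerivWithin 2 hh s 0 = 0 := by
    have h2 : iteratedDerivWithin 2 hh s 0
        = derivWithin (iteratedDerivWithin 1 hh s) s 0 :=
      congrFun iteratedDerivWithin_succ 0
    rw [h2, derivWithin_congr hEq (hEq h0s)]
    exact ((SVMAux.hasDerivAt_hh'_zero M L tn hM.1 hL.1 hf hφ).hasDerivWithinAt).derivWithin
      (hudiff 0 h0s)
  refine ⟨max (C₀/2) 1, lt_of_lt_of_le one_pos (le_max_right _ _), b, hbpos, ?_⟩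
  intro Δt hΔt
  have huF : uFun M L f g (φ (tn - Δt)) (φ tn) Δt 0
      = freeEnergy L f (phiHat M L f (φ (tn - Δt)) (φ tn) Δt)
        - Ftilde M L f (φ (tn - Δt)) (φ tn) Δt := by
    simp [uFun]
  refine ⟨huF, ?_⟩
  have hu2 : uFun M L f g (φ (tn - Δt)) (φ tn) Δt 0 = hh Δt := huF
  rw [hu2]
  have hxmem : Δt ∈ s := ⟨le_of_lt hΔt.1, hΔt.2⟩
  have htb := taylor_mean_remainder_bound (le_of_lt hbpos) hs3 hxmem (fun y hy => hC₀ y hy)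
  have hT : taylorWithinEval hh 2 s 0 Δt = 0 := by
    rw [taylor_within_apply]
    simp [Finset.sum_range_succ, it0, it1, it2]
  rw [hT, sub_zero, sub_zero, Real.norm_eq_abs] at htb
  have h3 : C₀ * Δt ^ (2+1) / ((Nat.factorial 2 : ℕ) : ℝ) ≤ max (C₀/2) 1 * Δt ^ 3 := by
    have hΔ3 : (0:ℝ) ≤ Δt ^ 3 := pow_nonneg (le_of_lt hΔt.1) 3
    have : C₀ * Δt ^ 3 / 2 = (C₀/2) * Δt ^ 3 := by ring
    rw [show (2+1) = 3 from rfl, show ((Nat.factorial 2 : ℕ) : ℝ) = 2 by norm_num [Nat.factorial], this]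
    exact mul_le_mul_of_nonneg_right (le_max_left _ _) hΔ3
  exact le_trans htb h3


end
end

section
/- Let f : ℝ^n → ℝ be continuously differentiable, C ∈ ℝ with f(x) + C > 0 for all x, and set q₀(x) = √(f(x) + C). Let L ∈ ℝ^{n×n} be symmetric, M ∈ ℝ^{n×n}, and let (φ, q) : [0, T] → ℝ^n × ℝ be continuously differentiable with φ'(t) = −M(Lφ(t) + 2q(t)∇q₀(φ(t))), q'(t) = ⟨∇q₀(φ(t)), φ'(t)⟩, and q(0) = q₀(φ(0)). Then q(t) = q₀(φ(t)) for all t ∈ [0, T]; consequently the quadratized energy (1/2)⟨φ(t), Lφ(t)⟩ + q(t)² − C equals the original free energy F(φ(t)) = (1/2)⟨φ(t), Lφ(t)⟩ + f(φ(t)) for all t, so the energy-quadratization reformulation is consistent with the original gradient flow. -/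
/-! The evolution law `q' = ⟨∇q₀(φ), φ'⟩` is exactly the chain rule for `q₀ ∘ φ`, whatever the
velocity `φ'` is, so `q - q₀ ∘ φ` has zero derivative and stays equal to its initial value `0`.
Then `q² = q₀(φ)² = f(φ) + C`, which turns the quadratized energy into the original one. -/

open scoped RealInnerProductSpace
open Matrix

noncomputable section

theorem eqOn_comp_of_hasDerivAt_inner_gradient {E : Type*}
    [NormedAddCommGroup E] [InnerProductSpace ℝ E] [CompleteSpace E]
    {g : E → ℝ} {φ v : ℝ → E} {q : ℝ → ℝ} {a b : ℝ}
    (hg : ∀ t ∈ Set.Icc a b, DifferentiableAt ℝ g (φ t))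
    (hφ : ∀ t ∈ Set.Icc a b, HasDerivAt φ (v t) t)
    (hq : ∀ t ∈ Set.Icc a b, HasDerivAt q ⟪gradient g (φ t), v t⟫ t)
    (ha : q a = g (φ a)) :
    Set.EqOn q (g ∘ φ) (Set.Icc a b) := by
  have hcomp : ∀ t ∈ Set.Icc a b, HasDerivAt (g ∘ φ) ⟪gradient g (φ t), v t⟫ t := fun t ht =>
    (hg t ht).hasGradientAt.hasFDerivAt.comp_hasDerivAt t (hφ t ht)
  exact eq_of_has_deriv_right_eq
    (fun t ht => (hq t (Set.mem_Icc_of_Ico ht)).hasDerivWithinAt)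
    (fun t ht => (hcomp t (Set.mem_Icc_of_Ico ht)).hasDerivWithinAt)
    (fun t ht => (hq t ht).continuousAt.continuousWithinAt)
    (fun t ht => (hcomp t ht).continuousAt.continuousWithinAt) ha

theorem eq_reformulation_consistent_general {n : ℕ}
    (f : Vec n → ℝ) (hf : ContDiff ℝ 1 f)
    (C : ℝ) (hfC : ∀ x : Vec n, 0 < f x + C)
    (q₀ : Vec n → ℝ) (hq₀ : ∀ x : Vec n, q₀ x = Real.sqrt (f x + C))
    (L M : Matrix (Fin n) (Fin n) ℝ)
    (T : ℝ) (φ : ℝ → Vec n) (q : ℝ → ℝ)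
    (hφ : ∀ t ∈ Set.Icc (0 : ℝ) T,
      HasDerivAt φ (-(mv M (mv L (φ t) + (2 * q t) • gradient q₀ (φ t)))) t)
    (hq : ∀ t ∈ Set.Icc (0 : ℝ) T,
      HasDerivAt q
        ⟪gradient q₀ (φ t), -(mv M (mv L (φ t) + (2 * q t) • gradient q₀ (φ t)))⟫ t)
    (h0 : q 0 = q₀ (φ 0)) :
    ∀ t ∈ Set.Icc (0 : ℝ) T,
      q t = q₀ (φ t) ∧
      (1 / 2 : ℝ) * ⟪φ t, mv L (φ t)⟫ + (q t) ^ 2 - C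
        = (1 / 2 : ℝ) * ⟪φ t, mv L (φ t)⟫ + f (φ t) := by
  have hq₀_diff : Differentiable ℝ q₀ := by
    rw [funext hq₀]
    exact ((hf.differentiable one_ne_zero).add_const C).sqrt fun x => (hfC x).ne'
  have h_track : Set.EqOn q (q₀ ∘ φ) (Set.Icc 0 T) :=
    eqOn_comp_of_hasDerivAt_inner_gradient (fun t _ => hq₀_diff (φ t)) hφ hq h0
  intro t ht
  refine ⟨h_track ht, ?_⟩
  rw [h_track ht, Function.comp_apply, hq₀, Real.sq_sqrt (hfC (φ t)).le]
  ring

/-- consistency of the energy-quadratization reformulation: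
if `(φ, q)` solves the EQ system `φ' = −M(Lφ + 2q∇q₀(φ))`, `q' = ⟨∇q₀(φ), φ'⟩` with the
consistent initial condition `q(0) = q₀(φ(0))`, where `q₀ = √(f + C)`, then
`q(t) = q₀(φ(t))` on `[0, T]`, and the quadratized energy equals the original free
energy along the solution. -/
theorem eq_reformulation_consistent {n : ℕ}
    (f : Vec n → ℝ) (hf : ContDiff ℝ 1 f)
    (C : ℝ) (hfC : ∀ x : Vec n, 0 < f x + C)
    (q₀ : Vec n → ℝ) (hq₀ : ∀ x : Vec n, q₀ x = Real.sqrt (f x + C))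
    (L M : Matrix (Fin n) (Fin n) ℝ) (hL : L.IsSymm)
    (T : ℝ) (φ : ℝ → Vec n) (q : ℝ → ℝ)
    (hφ : ∀ t ∈ Set.Icc (0 : ℝ) T,
      HasDerivAt φ (-(mv M (mv L (φ t) + (2 * q t) • gradient q₀ (φ t)))) t)
    (hq : ∀ t ∈ Set.Icc (0 : ℝ) T,
      HasDerivAt q
        ⟪gradient q₀ (φ t), -(mv M (mv L (φ t) + (2 * q t) • gradient q₀ (φ t)))⟫ t)
    (h0 : q 0 = q₀ (φ 0)) :
    ∀ t ∈ Set.Icc (0 : ℝ) T,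
      q t = q₀ (φ t) ∧
      (1 / 2 : ℝ) * ⟪φ t, mv L (φ t)⟫ + (q t) ^ 2 - C
        = (1 / 2 : ℝ) * ⟪φ t, mv L (φ t)⟫ + f (φ t) :=
  eq_reformulation_consistent_general f hf C hfC q₀ hq₀ L M T φ q hφ hq h0

end
end

section
/- Let f : ℝ^n → ℝ be continuously differentiable, C ∈ ℝ with f(x) + C > 0 for all x, q₀(x) = √(f(x) + C), L ∈ ℝ^{n×n} symmetric, M ∈ ℝ^{n×n}, and let (φ, q) : [0, T] → ℝ^n × ℝ be continuously differentiable with φ'(t) = −M μ(t) and q'(t) = ⟨∇q₀(φ(t)), φ'(t)⟩, where μ(t) = Lφ(t) + 2q(t)∇q₀(φ(t)). Then the quadratized energy E(t) = (1/2)⟨φ(t), Lφ(t)⟩ + q(t)² − C satisfies E'(t) = −⟨μ(t), Mμ(t)⟩ for all t; in particular, if M is positive semidefinite, E is nonincreasing. -/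
open scoped RealInnerProductSpace
open Matrix

noncomputable section

/-!
Along any path, the quadratized energy `E = ½⟪φ, Lφ⟫ + q² − C` has derivative `⟪Lφ, φ'⟫ + 2q q'`
for symmetric `L`. The auxiliary equation `q' = ⟪∇q₀(φ), φ'⟫` turns this into `⟪μ, φ'⟫` with
`μ = Lφ + 2q∇q₀(φ)`, and the flow `φ' = −Mμ` makes it `−⟪μ, Mμ⟫`, which is
nonpositive when `M` is positive semidefinite.
-/

section QuadratizedEnergy

variable {E : Type*} [NormedAddCommGroup E] [InnerProductSpace ℝ E]

theorem HasDerivAt.inner_apply_of_isSymmetric {L : E →L[ℝ] E}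
    (hL : (L : E →ₗ[ℝ] E).IsSymmetric) {φ : ℝ → E} {v : E} {t : ℝ} (hφ : HasDerivAt φ v t) :
    HasDerivAt (fun s => ⟪φ s, L (φ s)⟫) (2 * ⟪L (φ t), v⟫) t := by
  refine (hφ.inner ℝ (L.hasFDerivAt.comp_hasDerivAt t hφ)).congr_deriv ?_
  have hsymm : ⟪φ t, L v⟫ = ⟪L (φ t), v⟫ := (hL (φ t) v).symm
  simp only [Function.comp_apply, hsymm, real_inner_comm v]
  ring

theorem hasDerivAt_quadratizedEnergy {L : E →L[ℝ] E} (hL : (L : E →ₗ[ℝ] E).IsSymmetric)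
    (g : E → E) (C : ℝ) {φ : ℝ → E} {q : ℝ → ℝ} {v : E} {t : ℝ} (hφ : HasDerivAt φ v t)
    (hq : HasDerivAt q ⟪g (φ t), v⟫ t) :
    HasDerivAt (fun s => (1 / 2 : ℝ) * ⟪φ s, L (φ s)⟫ + q s ^ 2 - C)
      ⟪L (φ t) + (2 * q t) • g (φ t), v⟫ t := by
  refine ((((hφ.inner_apply_of_isSymmetric hL).const_mul (1 / 2 : ℝ)).add
    (hq.pow 2)).sub_const C).congr_deriv ?_
  rw [inner_add_left, real_inner_smul_left]
  push_cast
  ring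

end QuadratizedEnergy

theorem antitoneOn_Icc_of_hasDerivAt_nonpos {f f' : ℝ → ℝ} {a b : ℝ}
    (hf : ∀ t ∈ Set.Icc a b, HasDerivAt f (f' t) t) (hf' : ∀ t ∈ Set.Ioo a b, f' t ≤ 0) :
    AntitoneOn f (Set.Icc a b) := by
  refine antitoneOn_of_hasDerivWithinAt_nonpos (f' := f') (convex_Icc a b)
    (fun t ht => (hf t ht).continuousAt.continuousWithinAt) (fun t ht => ?_) (fun t ht => ?_)
  · exact (hf t (interior_subset ht)).hasDerivWithinAt
  · exact hf' t (by rwa [interior_Icc] at ht)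

theorem mv_eq_toEuclideanCLM {n : ℕ} (A : Matrix (Fin n) (Fin n) ℝ) :
    mv A = toEuclideanCLM (𝕜 := ℝ) A :=
  rfl

theorem eq_energy_dissipation_general {n : ℕ}
    (C : ℝ)
    (q₀ : Vec n → ℝ)
    (L M : Matrix (Fin n) (Fin n) ℝ) (hL : L.IsSymm)
    (T : ℝ) (φ : ℝ → Vec n) (q : ℝ → ℝ)
    (hφ : ∀ t ∈ Set.Icc (0 : ℝ) T,
      HasDerivAt φ (-(mv M (mv L (φ t) + (2 * q t) • gradient q₀ (φ t)))) t)
    (hq : ∀ t ∈ Set.Icc (0 : ℝ) T,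
      HasDerivAt q
        ⟪gradient q₀ (φ t), -(mv M (mv L (φ t) + (2 * q t) • gradient q₀ (φ t)))⟫ t) :
    (∀ t ∈ Set.Icc (0 : ℝ) T,
      HasDerivAt (fun s => (1 / 2 : ℝ) * ⟪φ s, mv L (φ s)⟫ + (q s) ^ 2 - C)
        (-⟪mv L (φ t) + (2 * q t) • gradient q₀ (φ t),
            mv M (mv L (φ t) + (2 * q t) • gradient q₀ (φ t))⟫) t) ∧
    (M.PosSemidef →
      AntitoneOn (fun s => (1 / 2 : ℝ) * ⟪φ s, mv L (φ s)⟫ + (q s) ^ 2 - C)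
        (Set.Icc (0 : ℝ) T)) := by
  have hL' : ((toEuclideanCLM (𝕜 := ℝ) L : Vec n →L[ℝ] Vec n) : Vec n →ₗ[ℝ] Vec n).IsSymmetric :=
    isSymmetric_toEuclideanLin_iff.mpr (isHermitian_iff_isSymm.mpr hL)
  have hE : ∀ t ∈ Set.Icc (0 : ℝ) T,
      HasDerivAt (fun s => (1 / 2 : ℝ) * ⟪φ s, mv L (φ s)⟫ + (q s) ^ 2 - C)
        (-⟪mv L (φ t) + (2 * q t) • gradient q₀ (φ t),
            mv M (mv L (φ t) + (2 * q t) • gradient q₀ (φ t))⟫) t := fun t ht => by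
    simpa only [mv_eq_toEuclideanCLM, inner_neg_right] using
      hasDerivAt_quadratizedEnergy hL' (gradient q₀) C (hφ t ht) (hq t ht)
  refine ⟨hE, fun hM => antitoneOn_Icc_of_hasDerivAt_nonpos hE fun t _ => ?_⟩
  exact neg_nonpos.mpr ((isPositive_toEuclideanLin_iff.mpr hM).inner_nonneg_right _)

/-- energy dissipation of the EQ reformulated system:
if `(φ, q)` solves `φ' = −Mμ`, `q' = ⟨∇q₀(φ), φ'⟩` with `μ = Lφ + 2q∇q₀(φ)` and
`q₀ = √(f + C)`, then the quadratized energy `E(t) = (1/2)⟨φ, Lφ⟩ + q² − C` satisfies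
`E'(t) = −⟨μ, Mμ⟩`; in particular, if `M` is positive semidefinite, `E` is nonincreasing. -/
theorem eq_energy_dissipation {n : ℕ}
    (f : Vec n → ℝ) (hf : ContDiff ℝ 1 f)
    (C : ℝ) (hfC : ∀ x : Vec n, 0 < f x + C)
    (q₀ : Vec n → ℝ) (hq₀ : ∀ x : Vec n, q₀ x = Real.sqrt (f x + C))
    (L M : Matrix (Fin n) (Fin n) ℝ) (hL : L.IsSymm)
    (T : ℝ) (φ : ℝ → Vec n) (q : ℝ → ℝ)
    (hφ : ∀ t ∈ Set.Icc (0 : ℝ) T,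
      HasDerivAt φ (-(mv M (mv L (φ t) + (2 * q t) • gradient q₀ (φ t)))) t)
    (hq : ∀ t ∈ Set.Icc (0 : ℝ) T,
      HasDerivAt q
        ⟪gradient q₀ (φ t), -(mv M (mv L (φ t) + (2 * q t) • gradient q₀ (φ t)))⟫ t) :
    (∀ t ∈ Set.Icc (0 : ℝ) T,
      HasDerivAt (fun s => (1 / 2 : ℝ) * ⟪φ s, mv L (φ s)⟫ + (q s) ^ 2 - C)
        (-⟪mv L (φ t) + (2 * q t) • gradient q₀ (φ t),
            mv M (mv L (φ t) + (2 * q t) • gradient q₀ (φ t))⟫) t) ∧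
    (M.PosSemidef →
      AntitoneOn (fun s => (1 / 2 : ℝ) * ⟪φ s, mv L (φ s)⟫ + (q s) ^ 2 - C)
        (Set.Icc (0 : ℝ) T)) :=
  eq_energy_dissipation_general C q₀ L M hL T φ q hφ hq

end
end

section
/- Let L ∈ ℝ^{n×n} be symmetric, M ∈ ℝ^{n×n}, C ∈ ℝ, let q₀ : ℝ^n → ℝ be differentiable, and fix φ^{n-1}, φ^n ∈ ℝ^n, q^n ∈ ℝ, Δt > 0. Set φ̄ = (3φ^n − φ^{n-1})/2 and suppose φ^{n+1} ∈ ℝ^n, q^{n+1} ∈ ℝ satisfy the semi-discrete EQ Crank–Nicolson scheme (φ^{n+1} − φ^n)/Δt = −Mμ and (q^{n+1} − q^n)/Δt = ⟨∇q₀(φ̄), (φ^{n+1} − φ^n)/Δt⟩, where μ = L(φ^n + φ^{n+1})/2 + (q^n + q^{n+1})∇q₀(φ̄). Then, with E^k = (1/2)⟨φ^k, Lφ^k⟩ + (q^k)² − C, the discrete energy dissipation law (E^{n+1} − E^n)/Δt = −⟨μ, Mμ⟩ holds exactly; in particular E^{n+1} ≤ E^n whenever M is positive semidefinite. -/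
/-!
The Crank–Nicolson scheme is built so that the discrete chain rule holds exactly. For a symmetric
`L` the midpoint rule is exact on the quadratic part of the energy,
`½⟨φⁿ⁺¹, Lφⁿ⁺¹⟩ − ½⟨φⁿ, Lφⁿ⟩ = ⟨φⁿ⁺¹ − φⁿ, L φⁿ⁺¹ᐟ²⟩`, and `(qⁿ⁺¹)² − (qⁿ)² = (qⁿ + qⁿ⁺¹)(qⁿ⁺¹ − qⁿ)`,
where the `q`-equation turns `qⁿ⁺¹ − qⁿ` into `⟨∇q₀(φ̄), φⁿ⁺¹ − φⁿ⟩`. Together,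
`δ⁺E = ⟨δ⁺φ, μ⟩`, and the `φ`-equation `δ⁺φ = −Mμ` gives `δ⁺E = −⟨μ, Mμ⟩`.
-/

open scoped RealInnerProductSpace
open Matrix

noncomputable section

section QuadratizedEnergy

variable {E : Type*} [NormedAddCommGroup E] [InnerProductSpace ℝ E]

def quadratizedEnergy (T : E →ₗ[ℝ] E) (C : ℝ) (φ : E) (q : ℝ) : ℝ :=
  (1 / 2 : ℝ) * ⟪φ, T φ⟫ + q ^ 2 - C

theorem LinearMap.IsSymmetric.half_inner_map_self_sub {T : E →ₗ[ℝ] E} (hT : T.IsSymmetric)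
    (φ φ' : E) :
    (1 / 2 : ℝ) * ⟪φ', T φ'⟫ - (1 / 2 : ℝ) * ⟪φ, T φ⟫ = ⟪φ' - φ, T ((1 / 2 : ℝ) • (φ + φ'))⟫ := by
  have hcross : ⟪φ', T φ⟫ = ⟪φ, T φ'⟫ := by
    rw [← hT, real_inner_comm]
  rw [map_smul, map_add, real_inner_smul_right, inner_sub_left, inner_add_right, inner_add_right,
    hcross]
  ring

theorem quadratizedEnergy_sub {T : E →ₗ[ℝ] E} (hT : T.IsSymmetric) (C : ℝ) (φ φ' : E)
    (q q' : ℝ) :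
    quadratizedEnergy T C φ' q' - quadratizedEnergy T C φ q
      = ⟪φ' - φ, T ((1 / 2 : ℝ) • (φ + φ'))⟫ + (q + q') * (q' - q) := by
  rw [← hT.half_inner_map_self_sub]
  unfold quadratizedEnergy
  ring

theorem quadratizedEnergy_sub_div {T : E →ₗ[ℝ] E} (hT : T.IsSymmetric) (C : ℝ) {φ φ' g : E}
    {q q' Δt : ℝ} (hq : (q' - q) / Δt = ⟪g, (1 / Δt) • (φ' - φ)⟫) :
    (quadratizedEnergy T C φ' q' - quadratizedEnergy T C φ q) / Δt
      = ⟪(1 / Δt) • (φ' - φ), T ((1 / 2 : ℝ) • (φ + φ')) + (q + q') • g⟫ := by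
  rw [quadratizedEnergy_sub hT, add_div, mul_div_assoc, hq, inner_add_right,
    real_inner_smul_left, real_inner_smul_left, real_inner_smul_right, real_inner_smul_right,
    real_inner_comm (φ' - φ) g]
  ring

end QuadratizedEnergy

theorem eq_scheme_discrete_energy_law_general {n : ℕ}
    (L M : Matrix (Fin n) (Fin n) ℝ) (hL : L.IsSymm) (C : ℝ)
    (q₀ : Vec n → ℝ)
    (φn φn1 : Vec n) (qn qn1 : ℝ) (Δt : ℝ) (hΔt : 0 < Δt)
    (φbar : Vec n)
    (μ : Vec n)
    (hμ : μ = mv L ((1 / 2 : ℝ) • (φn + φn1)) + (qn + qn1) • gradient q₀ φbar)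
    (hscheme_φ : (1 / Δt) • (φn1 - φn) = -(mv M μ))
    (hscheme_q : (qn1 - qn) / Δt = ⟪gradient q₀ φbar, (1 / Δt) • (φn1 - φn)⟫) :
    (((1 / 2 : ℝ) * ⟪φn1, mv L φn1⟫ + qn1 ^ 2 - C)
        - ((1 / 2 : ℝ) * ⟪φn, mv L φn⟫ + qn ^ 2 - C)) / Δt
      = -⟪μ, mv M μ⟫ ∧
    (M.PosSemidef →
      (1 / 2 : ℝ) * ⟪φn1, mv L φn1⟫ + qn1 ^ 2 - C
        ≤ (1 / 2 : ℝ) * ⟪φn, mv L φn⟫ + qn ^ 2 - C) := by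
  have hLsymm : (toEuclideanLin L).IsSymmetric :=
    isSymmetric_toEuclideanLin_iff.mpr (isHermitian_iff_isSymm.mpr hL)
  have hlaw : (quadratizedEnergy (toEuclideanLin L) C φn1 qn1
      - quadratizedEnergy (toEuclideanLin L) C φn qn) / Δt = -⟪μ, mv M μ⟫ := by
    have hμ' : μ = toEuclideanLin L ((1 / 2 : ℝ) • (φn + φn1)) + (qn + qn1) • gradient q₀ φbar :=
      hμ
    rw [quadratizedEnergy_sub_div hLsymm C hscheme_q, ← hμ', hscheme_φ, inner_neg_left,
      real_inner_comm]
  refine ⟨hlaw, fun hM => ?_⟩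
  have hdissipation : 0 ≤ ⟪μ, mv M μ⟫ :=
    (isPositive_toEuclideanLin_iff.mpr hM).inner_nonneg_right μ
  have hrate : (quadratizedEnergy (toEuclideanLin L) C φn1 qn1
      - quadratizedEnergy (toEuclideanLin L) C φn qn) / Δt ≤ 0 := by
    rw [hlaw]
    exact neg_nonpos.mpr hdissipation
  rwa [div_le_iff₀ hΔt, zero_mul, sub_nonpos] at hrate

/-- discrete energy law of the semi-discrete EQ Crank–Nicolson scheme:
if `(φⁿ⁺¹ − φⁿ)/Δt = −Mμ` and `(qⁿ⁺¹ − qⁿ)/Δt = ⟨∇q₀(φ̄), (φⁿ⁺¹ − φⁿ)/Δt⟩` with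
`μ = L(φⁿ + φⁿ⁺¹)/2 + (qⁿ + qⁿ⁺¹)∇q₀(φ̄)` and `φ̄ = (3φⁿ − φⁿ⁻¹)/2`, then for
`Eᵏ = (1/2)⟨φᵏ, Lφᵏ⟩ + (qᵏ)² − C` we have `(Eⁿ⁺¹ − Eⁿ)/Δt = −⟨μ, Mμ⟩`, and
`Eⁿ⁺¹ ≤ Eⁿ` when `M` is positive semidefinite. -/
theorem eq_scheme_discrete_energy_law {n : ℕ}
    (L M : Matrix (Fin n) (Fin n) ℝ) (hL : L.IsSymm) (C : ℝ)
    (q₀ : Vec n → ℝ) (hq₀ : Differentiable ℝ q₀)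
    (φm φn φn1 : Vec n) (qn qn1 : ℝ) (Δt : ℝ) (hΔt : 0 < Δt)
    (φbar : Vec n) (hφbar : φbar = (1 / 2 : ℝ) • ((3 : ℝ) • φn - φm))
    (μ : Vec n)
    (hμ : μ = mv L ((1 / 2 : ℝ) • (φn + φn1)) + (qn + qn1) • gradient q₀ φbar)
    (hscheme_φ : (1 / Δt) • (φn1 - φn) = -(mv M μ))
    (hscheme_q : (qn1 - qn) / Δt = ⟪gradient q₀ φbar, (1 / Δt) • (φn1 - φn)⟫) :
    (((1 / 2 : ℝ) * ⟪φn1, mv L φn1⟫ + qn1 ^ 2 - C)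
        - ((1 / 2 : ℝ) * ⟪φn, mv L φn⟫ + qn ^ 2 - C)) / Δt
      = -⟪μ, mv M μ⟫ ∧
    (M.PosSemidef →
      (1 / 2 : ℝ) * ⟪φn1, mv L φn1⟫ + qn1 ^ 2 - C
        ≤ (1 / 2 : ℝ) * ⟪φn, mv L φn⟫ + qn ^ 2 - C) :=
  eq_scheme_discrete_energy_law_general L M hL C q₀ φn φn1 qn qn1 Δt hΔt φbar μ hμ hscheme_φ
    hscheme_q

end
end
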